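/- arXiv:1909.01909 — 14 statements merged into one kernel-verified Lean document; each statement's English description precedes it below -/
import Mathlib

section
/- Let G be a symmetric n×n matrix with rational entries and let H ∈ ℤ^n be such that HᵀGH > 0 and such that the quadratic form x ↦ xᵀGx is negative definite on the real orthogonal complement {x ∈ ℝ^n : HᵀGx = 0} of H. Then for every pair of integers d, k, the set {D ∈ ℤ^n : DᵀGD = d and HᵀGD = k} is finite. -/
/-!
Write `B(x, y) = xᵀ G y` on `ℝⁿ`. The form `Q x = 2 B(H, x)² / B(H, H) - B(x, x)` is
`-B(x, s x)` for the reflection `s` of `ℝⁿ` in the hyperplane `H^⊥`; writing `x = t H + w` with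
`w ⊥ H` gives `Q x = t² B(H, H) - B(w, w)`, so `Q` is positive definite. Being continuous and
homogeneous of degree two, `Q` is then bounded below by `ε ‖x‖²` for some `ε > 0`. On the set in
question `Q` takes the constant value `2 k² / B(H, H) - d`, so that set consists of lattice points
in a bounded region.
-/

open Matrix Bornology

namespace LinearMap.BilinForm.IsSymm

variable {K M : Type*} [Field K] [LinearOrder K] [IsStrictOrderedRing K]
  [AddCommGroup M] [Module K M]

theorem two_mul_sq_div_sub_self_pos {B : LinearMap.BilinForm K M} (hB : B.IsSymm)
    {h : M} (hh : 0 < B h h) (hneg : ∀ w, w ≠ 0 → B h w = 0 → B w w < 0) {x : M} (hx : x ≠ 0) :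
    0 < 2 * B h x ^ 2 / B h h - B x x := by
  set t := B h x / B h h
  set w := x - t • h
  have hxw : x = t • h + w := by simp [w]
  have hhw : B h w = 0 := by
    simp only [w, map_sub, map_smul, smul_eq_mul, t]
    field_simp
    ring
  have hwh : B w h = 0 := (hB.eq w h).trans hhw
  have hQ : 2 * B h x ^ 2 / B h h - B x x = t ^ 2 * B h h - B w w := by
    rw [hxw]
    simp only [map_add, map_smul, LinearMap.add_apply, LinearMap.smul_apply, smul_eq_mul,
      hhw, hwh]
    field_simp
    ring
  rw [hQ]
  by_cases hw : w = 0
  · have ht : t ≠ 0 := by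
      rintro ht
      exact hx (by simpa [ht, hw] using hxw)
    simp only [hw, map_zero, sub_zero]
    positivity
  · nlinarith [hneg w hw hhw, sq_nonneg t]

end LinearMap.BilinForm.IsSymm

section Homogeneous

variable {E : Type*} [NormedAddCommGroup E] [NormedSpace ℝ E] [ProperSpace E] {f : E → ℝ}

theorem exists_pos_mul_sq_norm_le_of_homogeneous (hf : Continuous f)
    (hhom : ∀ (c : ℝ) x, f (c • x) = c ^ 2 * f x) (hpos : ∀ x, x ≠ 0 → 0 < f x) :
    ∃ ε > 0, ∀ x, ε * ‖x‖ ^ 2 ≤ f x := by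
  rcases subsingleton_or_nontrivial E with _ | _
  · refine ⟨1, one_pos, fun x => ?_⟩
    simpa [Subsingleton.elim x 0] using (hhom 0 0).ge
  obtain ⟨u, hu, humin⟩ := (isCompact_sphere (0 : E) 1).exists_isMinOn
    (NormedSpace.sphere_nonempty.mpr zero_le_one) hf.continuousOn
  refine ⟨f u, hpos u (ne_zero_of_mem_unit_sphere ⟨u, hu⟩), fun x => ?_⟩
  rcases eq_or_ne x 0 with rfl | hx
  · simpa using (hhom 0 0).ge
  have hnx : 0 < ‖x‖ := norm_pos_iff.mpr hx
  have hunit : ‖x‖⁻¹ • x ∈ Metric.sphere (0 : E) 1 := by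
    simp [norm_smul, inv_mul_cancel₀ hnx.ne']
  calc f u * ‖x‖ ^ 2 ≤ f (‖x‖⁻¹ • x) * ‖x‖ ^ 2 := by gcongr; exact humin hunit
    _ = f x := by rw [hhom]; field_simp

theorem isBounded_setOf_le_of_homogeneous (hf : Continuous f)
    (hhom : ∀ (c : ℝ) x, f (c • x) = c ^ 2 * f x) (hpos : ∀ x, x ≠ 0 → 0 < f x) (C : ℝ) :
    IsBounded {x | f x ≤ C} := by
  obtain ⟨ε, hε, hle⟩ := exists_pos_mul_sq_norm_le_of_homogeneous hf hhom hpos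
  refine (Metric.isBounded_iff_subset_closedBall 0).mpr ⟨max 1 (C / ε), fun x hx => ?_⟩
  have hsq : ‖x‖ ^ 2 ≤ C / ε := by rw [le_div_iff₀ hε, mul_comm]; exact (hle x).trans hx
  rw [mem_closedBall_zero_iff]
  rcases le_or_gt ‖x‖ 1 with h1 | h1
  · exact le_max_of_le_left h1
  · exact le_max_of_le_right (by nlinarith)

end Homogeneous

theorem finite_setOf_intCast_mem_of_isBounded {ι : Type*} [Fintype ι] {s : Set (ι → ℝ)}
    (hs : IsBounded s) : {D : ι → ℤ | (fun i => (D i : ℝ)) ∈ s}.Finite := by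
  have hiso : Isometry (Pi.map fun _ : ι => ((↑) : ℤ → ℝ)) :=
    .piMap _ fun _ => .of_dist_eq Int.dist_cast_real
  exact (hiso.antilipschitz.isBounded_preimage hs).isCompact_closure.finite_of_discrete.subset
    subset_closure

theorem Matrix.ratCast_intCast_dotProduct_mulVec {ι : Type*} [Fintype ι] (G : Matrix ι ι ℚ)
    (v w : ι → ℤ) :
    (((fun i => (v i : ℚ)) ⬝ᵥ (G *ᵥ fun i => (w i : ℚ)) : ℚ) : ℝ)
      = (fun i => (v i : ℝ)) ⬝ᵥ ((G.map ((↑) : ℚ → ℝ)) *ᵥ fun i => (w i : ℝ)) := by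
  simp [dotProduct, mulVec]

/-- Finiteness underlying Shimada's algorithm: if `H` has positive square for the
symmetric rational matrix `G` and the form is negative definite on the real
orthogonal complement of `H`, then for all integers `d, k` there are only finitely
many integral vectors `D` with `DᵀGD = d` and `HᵀGD = k`. -/
theorem stmt_2 (n : ℕ) (G : Matrix (Fin n) (Fin n) ℚ) (hG : G.IsSymm)
    (H : Fin n → ℤ)
    (hH : 0 < (fun i => (H i : ℚ)) ⬝ᵥ (G *ᵥ fun i => (H i : ℚ)))
    (hneg : ∀ x : Fin n → ℝ, x ≠ 0 →
      (fun i => (H i : ℝ)) ⬝ᵥ ((G.map ((↑) : ℚ → ℝ)) *ᵥ x) = 0 →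
      x ⬝ᵥ ((G.map ((↑) : ℚ → ℝ)) *ᵥ x) < 0)
    (d k : ℤ) :
    {D : Fin n → ℤ |
      (fun i => (D i : ℚ)) ⬝ᵥ (G *ᵥ fun i => (D i : ℚ)) = (d : ℚ) ∧
      (fun i => (H i : ℚ)) ⬝ᵥ (G *ᵥ fun i => (D i : ℚ)) = (k : ℚ)}.Finite := by
  set B := (G.map ((↑) : ℚ → ℝ)).toBilin'
  have hB : ∀ x y, B x y = x ⬝ᵥ (G.map ((↑) : ℚ → ℝ) *ᵥ y) := toBilin'_apply' _
  set h : Fin n → ℝ := fun i => (H i : ℝ)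
  have hh : 0 < B h h := by rw [hB, ← ratCast_intCast_dotProduct_mulVec]; exact_mod_cast hH
  have hQpos : ∀ x, x ≠ 0 → 0 < 2 * B h x ^ 2 / B h h - B x x :=
    fun x => (isSymm_toBilin'_iff_isSymm.mpr (hG.map _)).two_mul_sq_div_sub_self_pos hh
      (by simpa only [hB] using hneg)
  have hbdd := isBounded_setOf_le_of_homogeneous (by simp only [hB]; fun_prop)
    (fun c x => by simp only [map_smul, LinearMap.smul_apply, smul_eq_mul]; ring) hQpos
    (2 * (k : ℝ) ^ 2 / B h h - d)
  refine (finite_setOf_intCast_mem_of_isBounded hbdd).subset fun D ⟨hd, hk⟩ => ?_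
  have hd' : B (fun i => (D i : ℝ)) (fun i => (D i : ℝ)) = d := by
    rw [hB, ← ratCast_intCast_dotProduct_mulVec, hd, Rat.cast_intCast]
  have hk' : B h (fun i => (D i : ℝ)) = k := by
    rw [hB, ← ratCast_intCast_dotProduct_mulVec, hk, Rat.cast_intCast]
  simp only [Set.mem_ofPred_eq, hd', hk', le_refl]
end

section
/- Equip ℤ³ with the bilinear form x·y = xᵀGy, where G = [[−2,0,4],[0,−2,0],[4,0,−2]]. Let A₁=(1,0,0), A₂=(0,1,0), A₃=(0,0,1), A₄=(1,−2,2), A₅=(2,−3,2), A₆=(2,−2,1). Then D = (1,−1,1) satisfies D·D = 2 and D·Aᵢ = 2 for all i ∈ {1,…,6}, and D is the unique vector of ℤ³ with D·D = 2 and D·Aᵢ ≥ 0 for all i ∈ {1,…,6}. -/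
/-!
Write `E = (a, b, c)` and `s = a + b + c`, so that `D · E = 2s`. Since `Aᵢ + Aᵢ₊₃ = 2D`, nefness of
`E` says exactly that the three integers `yᵢ = E · Aᵢ / 2 - s` (`i = 1, 2, 3`) lie in `[-s, s]`.
The vectors `Aᵢ - D` lie in the negative definite plane `D^⊥` and form a regular hexagon there, so
`y₂ = y₁ + y₃` and `y₁² + y₂² + y₃² = 3s² - (3/2) E² = 3s² - 3`. On the other hand the hexagon
constraints give `y₁² + y₂² + y₃² ≤ 2s²`; hence `s = 1`, all `yᵢ` vanish, and `E = D`.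
-/

open Matrix

theorem sq_add_sq_add_sq_add_le_of_abs_le {R : Type*} [CommRing R] [LinearOrder R]
    [IsStrictOrderedRing R] {x y s : R} (hx : |x| ≤ s) (hy : |y| ≤ s) (hxy : |x + y| ≤ s) :
    x ^ 2 + y ^ 2 + (x + y) ^ 2 ≤ 2 * s ^ 2 := by
  rw [abs_le] at hx hy hxy
  rcases le_total 0 (x * y) with hprod | hprod
  · nlinarith
  · rcases le_total 0 x with hx0 | hx0 <;> rcases le_total 0 y with hy0 | hy0 <;>
      nlinarith

/-- In coordinates `E = (a, b, c)`, `hsq` is `E · E = 2` and `hᵢ` is `0 ≤ E · Aᵢ`, both halved. -/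
theorem eq_of_sq_eq_neg_one_of_nef {a b c : ℤ} (hsq : a ^ 2 + b ^ 2 + c ^ 2 - 4 * a * c = -1)
    (h₁ : 0 ≤ 2 * c - a) (h₂ : 0 ≤ -b) (h₃ : 0 ≤ 2 * a - c) (h₄ : 0 ≤ 3 * a + 2 * b)
    (h₅ : 0 ≤ 2 * a + 3 * b + 2 * c) (h₆ : 0 ≤ 2 * b + 3 * c) :
    a = 1 ∧ b = -1 ∧ c = 1 := by
  generalize hs : a + b + c = s
  generalize hy₁ : c - 2 * a - b = y₁
  generalize hy₃ : a - b - 2 * c = y₃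
  have hsum : y₁ ^ 2 + y₃ ^ 2 + (y₁ + y₃) ^ 2 = 3 * s ^ 2 - 3 := by
    subst hs hy₁ hy₃
    linear_combination 3 * hsq
  have hbound : y₁ ^ 2 + y₃ ^ 2 + (y₁ + y₃) ^ 2 ≤ 2 * s ^ 2 :=
    sq_add_sq_add_sq_add_le_of_abs_le (abs_le.2 ⟨by linarith, by linarith⟩)
      (abs_le.2 ⟨by linarith, by linarith⟩) (abs_le.2 ⟨by linarith, by linarith⟩)
  have hs_nonneg : 0 ≤ s := by linarith
  have hs_one : s = 1 := by
    have hle : s ^ 2 ≤ 3 := by linarith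
    have hge : 1 ≤ s ^ 2 := by nlinarith [sq_nonneg y₁, sq_nonneg y₃, sq_nonneg (y₁ + y₃)]
    nlinarith
  have hy₁_zero : y₁ = 0 := by nlinarith [sq_nonneg y₁, sq_nonneg y₃, sq_nonneg (y₁ + y₃)]
  have hy₃_zero : y₃ = 0 := by nlinarith [sq_nonneg y₁, sq_nonneg y₃, sq_nonneg (y₁ + y₃)]
  omega

/-- On the lattice `S₁` with Gram matrix `G`, the class `D = (1,−1,1)` is the
unique big and nef class of square `2`, and it meets each of the six
`(−2)`-curves `A₁,…,A₆` with multiplicity `2`. -/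
theorem stmt_4 :
    let G : Matrix (Fin 3) (Fin 3) ℤ := !![-2, 0, 4; 0, -2, 0; 4, 0, -2]
    let A : Fin 6 → Fin 3 → ℤ :=
      ![![1, 0, 0], ![0, 1, 0], ![0, 0, 1], ![1, -2, 2], ![2, -3, 2], ![2, -2, 1]]
    let D : Fin 3 → ℤ := ![1, -1, 1]
    D ⬝ᵥ (G *ᵥ D) = 2 ∧
    (∀ i : Fin 6, D ⬝ᵥ (G *ᵥ A i) = 2) ∧
    (∀ E : Fin 3 → ℤ, E ⬝ᵥ (G *ᵥ E) = 2 → (∀ i : Fin 6, 0 ≤ E ⬝ᵥ (G *ᵥ A i)) →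
      E = D) := by
  intro G A D
  refine ⟨by decide, by decide, fun E hsq hnef => ?_⟩
  simp only [dotProduct, mulVec, Int.reduceNeg, of_apply, cons_val', cons_val_fin_one,
    Fin.sum_univ_three, Fin.isValue, cons_val_zero, cons_val_one, cons_val, neg_mul, zero_mul,
    add_zero, zero_add, mul_neg, Fin.forall_fin_succ, mul_one, mul_zero, neg_zero,
    le_neg_add_iff_add_le, cons_val_succ, Int.neg_nonneg, le_add_neg_iff_add_le, Int.reduceMul,
    Int.reduceAdd, neg_neg, add_neg_cancel, neg_add_cancel, forall_const, G, A] at hsq hnef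
  obtain ⟨h₁, h₂, h₃, h₄, h₅, h₆⟩ := hnef
  obtain ⟨ha, hb, hc⟩ := eq_of_sq_eq_neg_one_of_nef (a := E 0) (b := E 1) (c := E 2)
    (by linarith) (by linarith) (by linarith) (by linarith) (by linarith) (by linarith)
    (by linarith)
  funext i
  fin_cases i <;> simp [D, ha, hb, hc]
end

section
/- Equip ℤ³ with the bilinear form x·y = xᵀGy, where G = [[−2,1,7],[1,−2,1],[7,1,−2]]. Let A₁=(1,0,0), A₂=(0,1,0), A₃=(0,0,1), A₄=(1,−2,2), A₅=(2,−3,2), A₆=(2,−2,1). Then D = (1,−1,1) satisfies D·D = 4 and D·Aᵢ = 4 for all i ∈ {1,…,6}; D is the unique vector of ℤ³ with D·D = 4 and D·Aᵢ ≥ 0 for all i; and there is no vector D' ∈ ℤ³ with 0 < D'·D' < 4 and D'·Aᵢ ≥ 0 for all i ∈ {1,…,6}. -/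
/-!
Write a class as `E = s • D + F` with `s = x + y + z`, so that `E · D = 4 s` and
`F = (a, -a - b, b)` is orthogonal to `D`; then `E² = 4 s² - 6 N` with
`N = a² - a b + b²` the Eisenstein norm of `(a, b)`. Since `E · Aᵢ = 4 s ± 3 ℓ` for
`ℓ ∈ {a + b, 2a - b, 2b - a}`, nefness confines `F` to a hexagon, on which `27 N ≤ 16 s²`.
Hence `0 < E² ≤ 4` forces `0 ≤ s ≤ 3`, and `E² = 4 s² - 6 N` then leaves only `s = 1`,
`N = 0`, i.e. `E = D`: the case `s = 2` would need `N = 2`, which is impossible since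
`N ≡ (a + b)² [ZMOD 3]`.
-/

open Matrix

theorem sq_add_mul_add_sq_le_sq_of_abs_le {α : Type*} [CommRing α] [LinearOrder α]
    [IsStrictOrderedRing α] {q r c : α} (hq : |q| ≤ c) (hr : |r| ≤ c) (hqr : |q + r| ≤ c) :
    q ^ 2 + q * r + r ^ 2 ≤ c ^ 2 := by
  have hq' : q ^ 2 ≤ c ^ 2 := sq_le_sq' (abs_le.mp hq).1 (abs_le.mp hq).2
  have hr' : r ^ 2 ≤ c ^ 2 := sq_le_sq' (abs_le.mp hr).1 (abs_le.mp hr).2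
  have hqr' : (q + r) ^ 2 ≤ c ^ 2 := sq_le_sq' (abs_le.mp hqr).1 (abs_le.mp hqr).2
  rcases le_total 0 (q * r) with hpos | hneg
  · nlinarith
  · rcases le_total (r * (q + r)) 0 with h | h
    · nlinarith
    · nlinarith [mul_nonpos_iff.mpr (Or.inl ⟨h, hneg⟩), sq_nonneg (q + r)]

theorem Int.sq_sub_mul_add_sq_ne_two (a b : ℤ) : a ^ 2 - a * b + b ^ 2 ≠ 2 := by
  intro h
  have h3 : ((a + b : ℤ) : ZMod 3) ^ 2 = 2 := by
    have := congrArg (fun n : ℤ => (n : ZMod 3)) h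
    have h30 : (3 : ZMod 3) = 0 := rfl
    push_cast at this ⊢
    linear_combination this + (a * b : ZMod 3) * h30
  generalize ((a + b : ℤ) : ZMod 3) = t at h3
  revert t
  decide

theorem eq_of_nef_of_sq_pos_of_sq_le_four {x y z : ℤ}
    (h₁ : 0 ≤ -2 * x + y + 7 * z) (h₂ : 0 ≤ x - 2 * y + z) (h₃ : 0 ≤ 7 * x + y - 2 * z)
    (h₄ : 0 ≤ 10 * x + 7 * y + z) (h₅ : 0 ≤ 7 * x + 10 * y + 7 * z)
    (h₆ : 0 ≤ x + 7 * y + 10 * z)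
    (hpos : 0 < -2 * x ^ 2 - 2 * y ^ 2 - 2 * z ^ 2 + 2 * x * y + 2 * y * z + 14 * x * z)
    (hle : -2 * x ^ 2 - 2 * y ^ 2 - 2 * z ^ 2 + 2 * x * y + 2 * y * z + 14 * x * z ≤ 4) :
    x = 1 ∧ y = -1 ∧ z = 1 := by
  obtain ⟨s, a, b, rfl, rfl, rfl⟩ : ∃ s a b : ℤ, x = s + a ∧ y = -s - a - b ∧ z = s + b :=
    ⟨x + y + z, -y - z, -x - y, by ring, by ring, by ring⟩
  have hsq : -2 * (s + a) ^ 2 - 2 * (-s - a - b) ^ 2 - 2 * (s + b) ^ 2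
      + 2 * (s + a) * (-s - a - b) + 2 * (-s - a - b) * (s + b) + 14 * (s + a) * (s + b)
      = 4 * s ^ 2 - 6 * (a ^ 2 - a * b + b ^ 2) := by
    ring
  rw [hsq] at hpos hle
  have hs : 0 ≤ s := by linarith
  have hN : 27 * (a ^ 2 - a * b + b ^ 2) ≤ 16 * s ^ 2 := by
    have := sq_add_mul_add_sq_le_sq_of_abs_le (q := 3 * (2 * a - b)) (r := 3 * (2 * b - a))
      (c := 4 * s) (abs_le.mpr ⟨by linarith, by linarith⟩) (abs_le.mpr ⟨by linarith, by linarith⟩)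
      (abs_le.mpr ⟨by linarith, by linarith⟩)
    linear_combination this
  have hN₀ : 0 ≤ a ^ 2 - a * b + b ^ 2 := by nlinarith [sq_nonneg (2 * a - b), sq_nonneg b]
  have hs₃ : s ≤ 3 := by nlinarith
  interval_cases s
  · omega
  · have hab : a = 0 ∧ b = 0 := by
      constructor <;>
        nlinarith [sq_nonneg (2 * a - b), sq_nonneg b, sq_nonneg a, sq_nonneg (2 * b - a)]
    omega
  · exact absurd (by omega) (Int.sq_sub_mul_add_sq_ne_two a b)
  · omega

/-- On the lattice `S₂` with Gram matrix `G`, the class `D = (1,−1,1)` has square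
`4`, meets each of the six `(−2)`-curves with multiplicity `4`, is the unique such
class of square `4` meeting all the `(−2)`-curves nonnegatively, and there is no
big and nef class of square strictly between `0` and `4`. -/
theorem stmt_5 :
    let G : Matrix (Fin 3) (Fin 3) ℤ := !![-2, 1, 7; 1, -2, 1; 7, 1, -2]
    let A : Fin 6 → Fin 3 → ℤ :=
      ![![1, 0, 0], ![0, 1, 0], ![0, 0, 1], ![1, -2, 2], ![2, -3, 2], ![2, -2, 1]]
    let D : Fin 3 → ℤ := ![1, -1, 1]
    D ⬝ᵥ (G *ᵥ D) = 4 ∧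
    (∀ i : Fin 6, D ⬝ᵥ (G *ᵥ A i) = 4) ∧
    (∀ E : Fin 3 → ℤ, E ⬝ᵥ (G *ᵥ E) = 4 → (∀ i : Fin 6, 0 ≤ E ⬝ᵥ (G *ᵥ A i)) →
      E = D) ∧
    (¬ ∃ D' : Fin 3 → ℤ, 0 < D' ⬝ᵥ (G *ᵥ D') ∧ D' ⬝ᵥ (G *ᵥ D') < 4 ∧
      ∀ i : Fin 6, 0 ≤ D' ⬝ᵥ (G *ᵥ A i)) := by
  intro G A D
  have eq_D_of_nef (E : Fin 3 → ℤ) (hpos : 0 < E ⬝ᵥ (G *ᵥ E)) (hle : E ⬝ᵥ (G *ᵥ E) ≤ 4)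
      (hnef : ∀ i, 0 ≤ E ⬝ᵥ (G *ᵥ A i)) : E = D := by
    simp only [Fin.forall_fin_succ, forall_const, G, A, dotProduct, mulVec, Fin.sum_univ_three,
      of_apply, cons_val', cons_val_fin_one, cons_val_zero, cons_val_one, cons_val,
      cons_val_succ] at hnef hpos hle
    obtain ⟨h₁, h₂, h₃, h₄, h₅, h₆⟩ := hnef
    obtain ⟨h0, h1, h2⟩ := eq_of_nef_of_sq_pos_of_sq_le_four (x := E 0) (y := E 1) (z := E 2)
      (by linarith) (by linarith) (by linarith) (by linarith) (by linarith) (by linarith)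
      (by linarith) (by linarith)
    ext i
    fin_cases i <;> simp [D, h0, h1, h2]
  refine ⟨by decide, by decide, fun E hE hnef => eq_D_of_nef E (by omega) hE.le hnef, ?_⟩
  rintro ⟨E, hpos, hlt, hnef⟩
  have hD := eq_D_of_nef E hpos hlt.le hnef
  subst hD
  exact absurd hlt (by decide)
end

section
/- Equip ℤ³ with the bilinear form x·y = xᵀGy, where G = [[−2,1,7],[1,−2,1],[7,1,−2]], and let A₁=(1,0,0), A₂=(0,1,0), A₃=(0,0,1), A₄=(1,−2,2), A₅=(2,−3,2), A₆=(2,−2,1). For an integer s > 0 let N(s) be the number of vectors D ∈ ℤ³ with D·D = s and D·Aᵢ ≥ 0 for all i ∈ {1,…,6}. Then N(4) = 1, N(10) = 6, N(12) = 6, N(16) = 1, N(18) = 6, N(22) = 12, and N(s) = 0 for every other integer s with 0 < s ≤ 22. -/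
/-!
Let `h = (1, -1, 1) = (A₁ + ⋯ + A₆) / 6`, so that `h² = 4` and `h · Aᵢ = 4` for all `i`.
The Hodge index theorem gives `(D · h)² ≥ 4 D²`, and the identity
`(D · h) (36 D² - (D · h)²) = 4 (x₁ x₃ x₅ + x₂ x₄ x₆)`, where `xᵢ = D · Aᵢ`, shows
`(D · h)² ≤ 36 D²` for every big and nef `D`. So `D² ≤ 22` forces `D · h ≤ 28`, which together
with nefness confines `D` to a finite box, and the counts are a finite check.
-/

open Matrix Finset

namespace NeronSeveriS2

abbrev gram : Matrix (Fin 3) (Fin 3) ℤ := !![-2, 1, 7; 1, -2, 1; 7, 1, -2]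

abbrev curve : Fin 6 → Fin 3 → ℤ :=
  ![![1, 0, 0], ![0, 1, 0], ![0, 0, 1], ![1, -2, 2], ![2, -3, 2], ![2, -2, 1]]

notation:70 D:70 " ⬝ₛ " E:71 => D ⬝ᵥ (gram *ᵥ E)

def IsNef (D : Fin 3 → ℤ) : Prop := ∀ i, 0 ≤ D ⬝ₛ curve i

instance : DecidablePred IsNef := fun D => inferInstanceAs (Decidable (∀ i, 0 ≤ D ⬝ₛ curve i))

def polarization : Fin 3 → ℤ := ![1, -1, 1]

lemma form_apply (D E : Fin 3 → ℤ) :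
    D ⬝ₛ E = D 0 * (-2 * E 0 + E 1 + 7 * E 2) + D 1 * (E 0 - 2 * E 1 + E 2)
      + D 2 * (7 * E 0 + E 1 - 2 * E 2) := by
  simp only [dotProduct, mulVec, Fin.sum_univ_three, of_apply, cons_val', cons_val_fin_one, Matrix.cons_val]
  ring

lemma form_self (D : Fin 3 → ℤ) :
    D ⬝ₛ D = -2 * D 0 ^ 2 - 2 * D 1 ^ 2 - 2 * D 2 ^ 2 + 2 * D 0 * D 1 + 14 * D 0 * D 2
      + 2 * D 1 * D 2 := by
  rw [form_apply]
  ring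

lemma form_polarization (D : Fin 3 → ℤ) : D ⬝ₛ polarization = 4 * (D 0 + D 1 + D 2) := by
  simp only [form_apply, polarization, Matrix.cons_val]
  ring

lemma form_curve (D : Fin 3 → ℤ) (i : Fin 6) :
    D ⬝ₛ curve i = ![-2 * D 0 + D 1 + 7 * D 2, D 0 - 2 * D 1 + D 2, 7 * D 0 + D 1 - 2 * D 2,
      10 * D 0 + 7 * D 1 + D 2, 7 * D 0 + 10 * D 1 + 7 * D 2, D 0 + 7 * D 1 + 10 * D 2] i := by
  fin_cases i <;> simp only [form_apply, Matrix.cons_val, Fin.reduceFinMk, Fin.zero_eta, Fin.mk_one] <;> ring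

lemma isNef_iff (D : Fin 3 → ℤ) : IsNef D ↔
    0 ≤ -2 * D 0 + D 1 + 7 * D 2 ∧ 0 ≤ D 0 - 2 * D 1 + D 2 ∧ 0 ≤ 7 * D 0 + D 1 - 2 * D 2 ∧
      0 ≤ 10 * D 0 + 7 * D 1 + D 2 ∧ 0 ≤ 7 * D 0 + 10 * D 1 + 7 * D 2 ∧
      0 ≤ D 0 + 7 * D 1 + 10 * D 2 := by
  simp only [IsNef, form_curve]
  simp [Fin.forall_fin_succ]

lemma four_mul_form_self_le_sq (D : Fin 3 → ℤ) : 4 * (D ⬝ₛ D) ≤ (D ⬝ₛ polarization) ^ 2 := by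
  rw [form_self, form_polarization]
  nlinarith [sq_nonneg (D 0 + 2 * D 1 + D 2), sq_nonneg (D 0 - D 2)]

lemma two_mul_form_polarization (D : Fin 3 → ℤ) :
    2 * (D ⬝ₛ polarization) = D ⬝ₛ curve 0 + D ⬝ₛ curve 3 := by
  simp only [form_apply, polarization, Matrix.cons_val]
  ring

/-- Both sides vanish on the six extremal rays of the nef cone, where two adjacent `D · Aᵢ`
vanish; each ray is spanned by a class of square `36` meeting `polarization` in `36`. -/
lemma form_polarization_mul_eq (D : Fin 3 → ℤ) :
    (D ⬝ₛ polarization) * (36 * (D ⬝ₛ D) - (D ⬝ₛ polarization) ^ 2) =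
      4 * ((D ⬝ₛ curve 0) * (D ⬝ₛ curve 2) * (D ⬝ₛ curve 4)
        + (D ⬝ₛ curve 1) * (D ⬝ₛ curve 3) * (D ⬝ₛ curve 5)) := by
  simp only [form_apply, polarization, Matrix.cons_val]
  ring

lemma form_polarization_pos {D : Fin 3 → ℤ} (hD : IsNef D) (hpos : 0 < D ⬝ₛ D) :
    0 < D ⬝ₛ polarization := by
  have hodge := four_mul_form_self_le_sq D
  have hsum := two_mul_form_polarization D
  nlinarith [hD 0, hD 3]

lemma sq_form_polarization_le {D : Fin 3 → ℤ} (hD : IsNef D) (hpos : 0 < D ⬝ₛ D) :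
    (D ⬝ₛ polarization) ^ 2 ≤ 36 * (D ⬝ₛ D) := by
  have hcubic := add_nonneg (mul_nonneg (mul_nonneg (hD 0) (hD 2)) (hD 4))
    (mul_nonneg (mul_nonneg (hD 1) (hD 3)) (hD 5))
  rw [← mul_nonneg_iff_of_pos_left (by norm_num : (0:ℤ) < 4), ← form_polarization_mul_eq,
    mul_nonneg_iff_of_pos_left (form_polarization_pos hD hpos)] at hcubic
  linarith

-- `Icc` on `ℤ` elaborates through a noncomputable order instance; the kernel evaluates it anyway.
noncomputable def box : Finset (Fin 3 → ℤ) := Fintype.piFinset ![Icc 1 13, Icc (-16) 2, Icc 1 13]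

lemma mem_box {D : Fin 3 → ℤ} (hD : IsNef D) (hpos : 0 < D ⬝ₛ D) (hle : D ⬝ₛ D ≤ 22) :
    D ∈ box := by
  have hupper := sq_form_polarization_le hD hpos
  have hlower := form_polarization_pos hD hpos
  rw [form_polarization] at hupper hlower
  have ht : D 0 + D 1 + D 2 ≤ 7 := by nlinarith
  rw [isNef_iff] at hD
  rw [box, Fintype.mem_piFinset]
  intro i
  fin_cases i <;> simp only [mem_Icc, Matrix.cons_val, Fin.zero_eta, Fin.mk_one, Fin.reduceFinMk] <;> omega

-- One line per square: `4, 10, 12, 16, 18` and (two lines) `22`.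
def bigNefOfSqLe22 : Finset (Fin 3 → ℤ) :=
  {![1, -1, 1],
   ![1, -1, 2], ![1, 0, 1], ![2, -3, 3], ![2, -1, 1], ![3, -4, 3], ![3, -3, 2],
   ![1, -1, 3], ![1, 1, 1], ![3, -5, 5], ![3, -1, 1], ![5, -7, 5], ![5, -5, 3],
   ![2, -2, 2],
   ![1, 0, 2], ![2, -3, 4], ![2, 0, 1], ![4, -6, 5], ![4, -3, 2], ![5, -6, 4],
   ![1, 0, 3], ![1, 1, 2], ![2, -3, 5], ![2, 1, 1], ![3, -5, 6], ![3, 0, 1],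
   ![5, -8, 7], ![5, -3, 2], ![6, -9, 7], ![6, -5, 3], ![7, -9, 6], ![7, -8, 5]}

lemma filter_box_eq_bigNefOfSqLe22 :
    box.filter (fun D => 0 < D ⬝ₛ D ∧ D ⬝ₛ D ≤ 22 ∧ IsNef D) = bigNefOfSqLe22 := by
  decide +kernel

lemma mem_bigNefOfSqLe22 {D : Fin 3 → ℤ} :
    D ∈ bigNefOfSqLe22 ↔ 0 < D ⬝ₛ D ∧ D ⬝ₛ D ≤ 22 ∧ IsNef D := by
  rw [← filter_box_eq_bigNefOfSqLe22, mem_filter]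
  exact ⟨And.right, fun h => ⟨mem_box h.2.2 h.1 h.2.1, h⟩⟩

lemma ncard_setOf_form_self_eq {s : ℤ} (hpos : 0 < s) (hle : s ≤ 22) :
    {D | D ⬝ₛ D = s ∧ IsNef D}.ncard = (bigNefOfSqLe22.filter fun D => D ⬝ₛ D = s).card := by
  rw [← Set.ncard_coe_finset, coe_filter]
  congr 1
  ext D
  simp only [Set.mem_ofPred_eq, mem_bigNefOfSqLe22]
  constructor
  · rintro ⟨rfl, hD⟩
    exact ⟨⟨hpos, hle, hD⟩, rfl⟩
  · rintro ⟨⟨-, -, hD⟩, hs⟩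
    exact ⟨hs, hD⟩

lemma form_self_mem_of_mem_bigNefOfSqLe22 :
    ∀ D ∈ bigNefOfSqLe22, D ⬝ₛ D ∈ ({4, 10, 12, 16, 18, 22} : Set ℤ) := by
  decide

end NeronSeveriS2

open NeronSeveriS2

/-- The initial coefficients of the generating series `Ξ_X(T) = Σ T^{D²}` over big
and nef classes `D` on a K3 surface of type `S₂`: writing `N s` for the number of
vectors of square `s` meeting all six `(−2)`-curves nonnegatively, one has
`N 4 = 1`, `N 10 = 6`, `N 12 = 6`, `N 16 = 1`, `N 18 = 6`, `N 22 = 12`, and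
`N s = 0` for every other `0 < s ≤ 22`. -/
theorem stmt_6 :
    let G : Matrix (Fin 3) (Fin 3) ℤ := !![-2, 1, 7; 1, -2, 1; 7, 1, -2]
    let A : Fin 6 → Fin 3 → ℤ :=
      ![![1, 0, 0], ![0, 1, 0], ![0, 0, 1], ![1, -2, 2], ![2, -3, 2], ![2, -2, 1]]
    let N : ℤ → ℕ := fun s =>
      {D : Fin 3 → ℤ | D ⬝ᵥ (G *ᵥ D) = s ∧ ∀ i : Fin 6, 0 ≤ D ⬝ᵥ (G *ᵥ A i)}.ncard
    N 4 = 1 ∧ N 10 = 6 ∧ N 12 = 6 ∧ N 16 = 1 ∧ N 18 = 6 ∧ N 22 = 12 ∧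
      ∀ s : ℤ, 0 < s → s ≤ 22 → s ∉ ({4, 10, 12, 16, 18, 22} : Set ℤ) → N s = 0 := by
  intro G A N
  have hN {s : ℤ} (hpos : 0 < s) (hle : s ≤ 22) :
      N s = (bigNefOfSqLe22.filter fun D => D ⬝ₛ D = s).card :=
    ncard_setOf_form_self_eq hpos hle
  refine ⟨?_, ?_, ?_, ?_, ?_, ?_, fun s hpos hle hs => ?_⟩
  iterate 6 (rw [hN (by norm_num) (by norm_num)]; decide)
  rw [hN hpos hle, card_eq_zero, filter_eq_empty_iff]
  rintro D hD rfl
  exact hs (form_self_mem_of_mem_bigNefOfSqLe22 D hD)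
end

section
/- Equip ℤ³ with the bilinear form x·y = xᵀGy, where G = [[12,0,0],[0,−2,1],[0,1,−2]]. Let A₁=(0,1,0), A₂=(0,0,1), A₃=(1,−3,−2), A₄=(1,−2,−3). Then D = (1,−2,−2) satisfies D·D = 4 and D·Aᵢ = 2 for all i ∈ {1,…,4}; D is the unique vector of ℤ³ with D·D = 4 and D·Aᵢ ≥ 0 for all i; and there is no vector D' ∈ ℤ³ with 0 < D'·D' < 4 and D'·Aᵢ ≥ 0 for all i ∈ {1,…,4}. -/
/-! Writing `E = (x, y, z)`, nefness says `2y ≤ z`, `2z ≤ y`, `0 ≤ 12x + 4y + z` and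
`0 ≤ 12x + y + 4z`. On that cone `25 (y² - yz + z²) ≤ 144 x²`, with equality along the ray of `D`,
so `0 < E·E = 12x² - 2(y² - yz + z²) ≤ 4` forces `x ≤ 2`, which leaves finitely many candidates. -/

open Matrix

theorem quadratic_le_of_mem_nefCone {R : Type*} [CommRing R] [LinearOrder R]
    [IsStrictOrderedRing R] (x y z : R) (h₁ : 2 * y ≤ z) (h₂ : 2 * z ≤ y)
    (h₃ : 0 ≤ 12 * x + 4 * y + z) (h₄ : 0 ≤ 12 * x + y + 4 * z) :
    25 * (y ^ 2 - y * z + z ^ 2) ≤ 144 * x ^ 2 := by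
  rcases le_total y z with h | h
  · nlinarith [mul_nonneg (show (0 : R) ≤ 3 * y - 8 * z by linarith)
      (show (0 : R) ≤ z - y by linarith)]
  · nlinarith [mul_nonneg (show (0 : R) ≤ 3 * z - 8 * y by linarith)
      (show (0 : R) ≤ y - z by linarith)]

theorem eq_of_mem_nefCone_of_form_pos_of_form_le_four (x y z : ℤ)
    (h₁ : 2 * y ≤ z) (h₂ : 2 * z ≤ y)
    (h₃ : 0 ≤ 12 * x + 4 * y + z) (h₄ : 0 ≤ 12 * x + y + 4 * z)
    (hpos : 0 < 12 * x ^ 2 - 2 * (y ^ 2 - y * z + z ^ 2))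
    (hle : 12 * x ^ 2 - 2 * (y ^ 2 - y * z + z ^ 2) ≤ 4) :
    x = 1 ∧ y = -2 ∧ z = -2 := by
  have hx : x ≤ 2 := by nlinarith [quadratic_le_of_mem_nefCone x y z h₁ h₂ h₃ h₄]
  obtain ⟨hx₀, hy, hy', hz, hz'⟩ : 0 ≤ x ∧ -6 ≤ y ∧ y ≤ 0 ∧ -6 ≤ z ∧ z ≤ 0 := by omega
  interval_cases x <;> interval_cases y <;> interval_cases z <;> omega

namespace S3

abbrev gram : Matrix (Fin 3) (Fin 3) ℤ := !![12, 0, 0; 0, -2, 1; 0, 1, -2]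

abbrev negCurve : Fin 4 → Fin 3 → ℤ := ![![0, 1, 0], ![0, 0, 1], ![1, -3, -2], ![1, -2, -3]]

def IsNef (E : Fin 3 → ℤ) : Prop := ∀ i : Fin 4, 0 ≤ E ⬝ᵥ (gram *ᵥ negCurve i)

theorem dotProduct_gram_mulVec_self (E : Fin 3 → ℤ) :
    E ⬝ᵥ (gram *ᵥ E) = 12 * E 0 ^ 2 - 2 * (E 1 ^ 2 - E 1 * E 2 + E 2 ^ 2) := by
  simp [dotProduct, mulVec, Fin.sum_univ_succ]
  ring

theorem isNef_iff (E : Fin 3 → ℤ) :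
    IsNef E ↔ 2 * E 1 ≤ E 2 ∧ 2 * E 2 ≤ E 1 ∧
      0 ≤ 12 * E 0 + 4 * E 1 + E 2 ∧ 0 ≤ 12 * E 0 + E 1 + 4 * E 2 := by
  simp [IsNef, Fin.forall_fin_succ, dotProduct, mulVec, Fin.sum_univ_succ]
  omega

theorem eq_of_isNef_of_sq_pos_of_sq_le_four {E : Fin 3 → ℤ} (hnef : IsNef E)
    (hpos : 0 < E ⬝ᵥ (gram *ᵥ E)) (hle : E ⬝ᵥ (gram *ᵥ E) ≤ 4) : E = ![1, -2, -2] := by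
  rw [dotProduct_gram_mulVec_self] at hpos hle
  obtain ⟨h₁, h₂, h₃, h₄⟩ := (isNef_iff E).1 hnef
  obtain ⟨hx, hy, hz⟩ :=
    eq_of_mem_nefCone_of_form_pos_of_form_le_four _ _ _ h₁ h₂ h₃ h₄ hpos hle
  ext i
  fin_cases i <;> simp [hx, hy, hz]

end S3

/-- On the lattice `S₃` with Gram matrix `G` in the basis `(L, A₁, A₂)`, the class
`D = L − 2A₁ − 2A₂ = (1,−2,−2)` has square `4`, meets each of the four
`(−2)`-curves with multiplicity `2`, is the unique such class of square `4`
meeting all `(−2)`-curves nonnegatively, and there is no big and nef class of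
square strictly between `0` and `4`. -/
theorem stmt_7 :
    let G : Matrix (Fin 3) (Fin 3) ℤ := !![12, 0, 0; 0, -2, 1; 0, 1, -2]
    let A : Fin 4 → Fin 3 → ℤ :=
      ![![0, 1, 0], ![0, 0, 1], ![1, -3, -2], ![1, -2, -3]]
    let D : Fin 3 → ℤ := ![1, -2, -2]
    D ⬝ᵥ (G *ᵥ D) = 4 ∧
    (∀ i : Fin 4, D ⬝ᵥ (G *ᵥ A i) = 2) ∧
    (∀ E : Fin 3 → ℤ, E ⬝ᵥ (G *ᵥ E) = 4 → (∀ i : Fin 4, 0 ≤ E ⬝ᵥ (G *ᵥ A i)) →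
      E = D) ∧
    (¬ ∃ D' : Fin 3 → ℤ, 0 < D' ⬝ᵥ (G *ᵥ D') ∧ D' ⬝ᵥ (G *ᵥ D') < 4 ∧
      ∀ i : Fin 4, 0 ≤ D' ⬝ᵥ (G *ᵥ A i)) := by
  intro G A D
  refine ⟨by decide, by decide, ?_, ?_⟩
  · intro E hsq hnef
    exact S3.eq_of_isNef_of_sq_pos_of_sq_le_four hnef (four_pos.trans_eq hsq.symm) hsq.le
  · rintro ⟨E, hpos, hlt, hnef⟩
    obtain rfl : E = D := S3.eq_of_isNef_of_sq_pos_of_sq_le_four hnef hpos hlt.le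
    exact absurd hlt (by decide)
end

section
/- Equip ℤ³ with the bilinear form x·y = xᵀGy, where G = [[−2,1,5],[1,−2,0],[5,0,−2]]. Let A₁=(1,0,0), A₃=(0,1,0), A₅=(0,0,1), A₂=(1,−2,2), A₄=(3,−4,3), A₆=(3,−3,2). Then D = (1,−1,1) satisfies D·D = 2, D·A₁ = D·A₂ = 2 and D·Aⱼ = 3 for j ∈ {3,4,5,6}, and D is the unique vector of ℤ³ with D·D = 2 and D·Aᵢ ≥ 0 for all i ∈ {1,…,6}. -/
/-!
Since `2D = A₁ + A₂`, every nef class `E` has `D·E ≥ 0`. The nef cone is the cone over a hexagon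
whose six vertices `R` all satisfy `44 R² ≥ 3 (D·R)²`; a cubic identity expresses
`2 (D·E) (44 E² - 3 (D·E)²)` as a sum of products of the nonnegative numbers `E·Aᵢ`, so
`3 (D·E)² ≤ 88` whenever `E² = 2`, i.e. `D·E ≤ 5`. Nefness together with `D·E ≤ 5` confines `E`
to a box of integer vectors, which is searched.
-/

open Matrix

namespace S6

def gram : Matrix (Fin 3) (Fin 3) ℤ := !![-2, 1, 5; 1, -2, 0; 5, 0, -2]

def pairing (u v : Fin 3 → ℤ) : ℤ := u ⬝ᵥ (gram *ᵥ v)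

-- `curve i` is the curve `A_(i+1)` of the paper.
def curve : Fin 6 → Fin 3 → ℤ :=
  ![![1, 0, 0], ![1, -2, 2], ![0, 1, 0], ![3, -4, 3], ![0, 0, 1], ![3, -3, 2]]

def polarization : Fin 3 → ℤ := ![1, -1, 1]

def IsNef (E : Fin 3 → ℤ) : Prop := ∀ i, 0 ≤ pairing E (curve i)

lemma pairing_eq (u v : Fin 3 → ℤ) :
    pairing u v = -2 * u 0 * v 0 + u 0 * v 1 + 5 * u 0 * v 2 + u 1 * v 0 - 2 * u 1 * v 1
      + 5 * u 2 * v 0 - 2 * u 2 * v 2 := by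
  simp only [pairing, dotProduct, mulVec, gram, of_apply, cons_val', cons_val_fin_one,
    Fin.sum_univ_three, cons_val_zero, cons_val_one, cons_val, neg_mul, one_mul, zero_mul, add_zero]
  ring

lemma pairing_self (E : Fin 3 → ℤ) :
    pairing E E = -2 * E 0 ^ 2 - 2 * E 1 ^ 2 - 2 * E 2 ^ 2 + 2 * E 0 * E 1 + 10 * E 0 * E 2 := by
  rw [pairing_eq]
  ring

lemma pairing_polarization (E : Fin 3 → ℤ) :
    pairing E polarization = 2 * E 0 + 3 * E 1 + 3 * E 2 := by
  simp only [pairing_eq, polarization, cons_val_zero, cons_val_one, cons_val]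
  ring

lemma isNef_iff (E : Fin 3 → ℤ) :
    IsNef E ↔ 0 ≤ -2 * E 0 + E 1 + 5 * E 2 ∧ 0 ≤ 6 * E 0 + 5 * E 1 + E 2 ∧ 0 ≤ E 0 - 2 * E 1 ∧
      0 ≤ 5 * E 0 + 11 * E 1 + 9 * E 2 ∧ 0 ≤ 5 * E 0 - 2 * E 2 ∧ 0 ≤ E 0 + 9 * E 1 + 11 * E 2 := by
  simp only [IsNef, Fin.forall_fin_succ, pairing_eq, curve, cons_val_zero,
    cons_val_one, cons_val, cons_val_succ, cons_val_fin_one, IsEmpty.forall_iff, and_true]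
  omega

lemma two_mul_pairing_polarization (E : Fin 3 → ℤ) :
    2 * pairing E polarization = pairing E (curve 0) + pairing E (curve 1) := by
  simp only [pairing_eq, polarization, curve, cons_val_zero, cons_val_one, cons_val]
  ring

lemma polarization_cubic_identity (E : Fin 3 → ℤ) :
    2 * pairing E polarization * (44 * pairing E E - 3 * pairing E polarization ^ 2) =
      pairing E (curve 0) ^ 2 * pairing E (curve 1) + pairing E (curve 0) * pairing E (curve 1) ^ 2
        + 8 * (pairing E (curve 0) * pairing E (curve 3) * pairing E (curve 4))
        + 8 * (pairing E (curve 1) * pairing E (curve 2) * pairing E (curve 5)) := by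
  simp only [pairing_eq, polarization, curve, cons_val_zero, cons_val_one, cons_val]
  ring

lemma pairing_polarization_nonneg {E : Fin 3 → ℤ} (hE : IsNef E) :
    0 ≤ pairing E polarization := by
  linarith [two_mul_pairing_polarization E, hE 0, hE 1]

lemma pairing_polarization_le_five {E : Fin 3 → ℤ} (hE : IsNef E) (hsq : pairing E E = 2) :
    pairing E polarization ≤ 5 := by
  have hcubic : 0 ≤ 2 * pairing E polarization * (44 * 2 - 3 * pairing E polarization ^ 2) := by
    have identity := polarization_cubic_identity E
    rw [hsq] at identity
    rw [identity]
    have := mul_nonneg (mul_nonneg (hE 0) (hE 0)) (hE 1)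
    have := mul_nonneg (mul_nonneg (hE 0) (hE 1)) (hE 1)
    have := mul_nonneg (mul_nonneg (hE 0) (hE 3)) (hE 4)
    have := mul_nonneg (mul_nonneg (hE 1) (hE 2)) (hE 5)
    linarith
  nlinarith [pairing_polarization_nonneg hE]

lemma eq_polarization_of_isNef {E : Fin 3 → ℤ} (hE : IsNef E) (hsq : pairing E E = 2) :
    E = polarization := by
  have hD := pairing_polarization_le_five hE hsq
  rw [isNef_iff] at hE
  rw [pairing_self] at hsq
  rw [pairing_polarization] at hD
  obtain ⟨x, y, z, rfl⟩ : ∃ x y z, E = ![x, y, z] :=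
    ⟨E 0, E 1, E 2, by funext i; fin_cases i <;> rfl⟩
  simp only [cons_val_zero, cons_val_one, cons_val] at hE hsq hD
  obtain ⟨hx₀, hx₁⟩ : 0 ≤ x ∧ x ≤ 4 := by omega
  obtain ⟨hy₀, hy₁⟩ : -5 ≤ y ∧ y ≤ 0 := by omega
  obtain ⟨hz₀, hz₁⟩ : 0 ≤ z ∧ z ≤ 4 := by omega
  interval_cases x <;> interval_cases y <;> interval_cases z <;> first | rfl | omega

end S6

/-- On the lattice `S₆` with Gram matrix `G` in the basis `(A₁, A₃, A₅)`, the class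
`D = (1,−1,1)` has square `2`, meets `A₁, A₂` with multiplicity `2` and
`A₃, A₄, A₅, A₆` with multiplicity `3`, and is the unique class of square `2`
meeting all six `(−2)`-curves nonnegatively. Here `A 0 = A₁, …, A 5 = A₆`. -/
theorem stmt_8 :
    let G : Matrix (Fin 3) (Fin 3) ℤ := !![-2, 1, 5; 1, -2, 0; 5, 0, -2]
    let A : Fin 6 → Fin 3 → ℤ :=
      ![![1, 0, 0], ![1, -2, 2], ![0, 1, 0], ![3, -4, 3], ![0, 0, 1], ![3, -3, 2]]
    let D : Fin 3 → ℤ := ![1, -1, 1]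
    D ⬝ᵥ (G *ᵥ D) = 2 ∧
    D ⬝ᵥ (G *ᵥ A 0) = 2 ∧ D ⬝ᵥ (G *ᵥ A 1) = 2 ∧
    D ⬝ᵥ (G *ᵥ A 2) = 3 ∧ D ⬝ᵥ (G *ᵥ A 3) = 3 ∧
    D ⬝ᵥ (G *ᵥ A 4) = 3 ∧ D ⬝ᵥ (G *ᵥ A 5) = 3 ∧
    (∀ E : Fin 3 → ℤ, E ⬝ᵥ (G *ᵥ E) = 2 → (∀ i : Fin 6, 0 ≤ E ⬝ᵥ (G *ᵥ A i)) →
      E = D) := by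
  intro G A D
  exact ⟨by decide, by decide, by decide, by decide, by decide, by decide, by decide,
    fun E hsq hE => S6.eq_polarization_of_isNef hE hsq⟩
end

section
/- Equip ℤ⁴ with the bilinear form x·y = xᵀGy, where G = [[2,1,1,1],[1,−2,0,0],[1,0,−2,0],[1,0,0,−2]]. Let L=(1,0,0,0), A₁=(0,1,0,0), A₂=(0,0,1,0), A₃=(0,0,0,1), A₄=L−A₁, A₅=L−A₂, A₆=L−A₃. Then L·L = 2, L·Aᵢ = 1 for all i ∈ {1,…,6}, and L is the unique vector D ∈ ℤ⁴ with D·D = 2 and D·Aᵢ ≥ 0 for all i ∈ {1,…,6}. -/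
/-!
Write `D = a L + b A₁ + c A₂ + d A₃`. Since `Aᵢ + Aᵢ₊₃ = L`, the quadratic form satisfies
`16 D² = 8 ∑ᵢ₌₁³ (D·Aᵢ)(D·Aᵢ₊₃) + (a + 4(b + c + d))² + 7a²`,
so a class of square `2` meeting all six curves nonnegatively has `7a² ≤ 32`, i.e. `a ≤ 2`.
The linear nefness inequalities force `a > 0`, exclude `a = 2` by a finite check, and for
`a = 1` they give `b = c = d = 0`.
-/

open Matrix

namespace L24

def gram : Matrix (Fin 4) (Fin 4) ℤ :=
  !![2, 1, 1, 1; 1, -2, 0, 0; 1, 0, -2, 0; 1, 0, 0, -2]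

def curve : Fin 6 → Fin 4 → ℤ :=
  ![![0, 1, 0, 0], ![0, 0, 1, 0], ![0, 0, 0, 1],
    ![1, -1, 0, 0], ![1, 0, -1, 0], ![1, 0, 0, -1]]

lemma dotProduct_gram_mulVec_self (D : Fin 4 → ℤ) :
    D ⬝ᵥ (gram *ᵥ D) =
      2 * (D 0 ^ 2 + D 0 * (D 1 + D 2 + D 3) - (D 1 ^ 2 + D 2 ^ 2 + D 3 ^ 2)) := by
  simp only [dotProduct, mulVec, gram, of_apply, cons_val', cons_val_fin_one, Fin.sum_univ_four,
    cons_val_zero, cons_val_one, cons_val]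
  ring

lemma dotProduct_gram_mulVec_curve (D : Fin 4 → ℤ) (i : Fin 6) :
    D ⬝ᵥ (gram *ᵥ curve i) =
      ![D 0 - 2 * D 1, D 0 - 2 * D 2, D 0 - 2 * D 3,
        D 0 + 3 * D 1 + D 2 + D 3, D 0 + D 1 + 3 * D 2 + D 3, D 0 + D 1 + D 2 + 3 * D 3] i := by
  fin_cases i <;>
  · simp only [dotProduct, mulVec, gram, curve, of_apply, cons_val', cons_val_fin_one,
      Fin.sum_univ_four, Fin.reduceFinMk, Fin.zero_eta, Fin.mk_one, cons_val_zero, cons_val_one,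
      cons_val]
    ring

lemma sum_mul_add_sq_eq {R : Type*} [CommRing R] (a b c d : R) :
    8 * ((a - 2 * b) * (a + 3 * b + c + d) + (a - 2 * c) * (a + b + 3 * c + d)
        + (a - 2 * d) * (a + b + c + 3 * d)) + (a + 4 * (b + c + d)) ^ 2 + 7 * a ^ 2
      = 32 * (a ^ 2 + a * (b + c + d) - (b ^ 2 + c ^ 2 + d ^ 2)) := by
  ring

section Nef

variable {a b c d : ℤ} (hq : a ^ 2 + a * (b + c + d) - (b ^ 2 + c ^ 2 + d ^ 2) = 1)
  (h₁ : 0 ≤ a - 2 * b) (h₂ : 0 ≤ a - 2 * c) (h₃ : 0 ≤ a - 2 * d)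
  (h₄ : 0 ≤ a + 3 * b + c + d) (h₅ : 0 ≤ a + b + 3 * c + d) (h₆ : 0 ≤ a + b + c + 3 * d)
include hq h₁ h₂ h₃ h₄ h₅ h₆

lemma pos_of_nef : 0 < a := by
  by_contra! ha
  have ha₀ : a = 0 := by omega
  subst ha₀
  nlinarith [sq_nonneg b, sq_nonneg c, sq_nonneg d]

lemma le_two_of_nef : a ≤ 2 := by
  nlinarith [sum_mul_add_sq_eq a b c d, mul_nonneg h₁ h₄, mul_nonneg h₂ h₅, mul_nonneg h₃ h₆,
    sq_nonneg (a + 4 * (b + c + d))]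

lemma ne_two_of_nef : a ≠ 2 := by
  rintro rfl
  obtain ⟨hb₀, hb₁⟩ : -1 ≤ b ∧ b ≤ 1 := by omega
  obtain ⟨hc₀, hc₁⟩ : -1 ≤ c ∧ c ≤ 1 := by omega
  obtain ⟨hd₀, hd₁⟩ : -1 ≤ d ∧ d ≤ 1 := by omega
  interval_cases b <;> interval_cases c <;> interval_cases d <;> omega

lemma eq_one_zero_zero_zero_of_nef : a = 1 ∧ b = 0 ∧ c = 0 ∧ d = 0 := by
  have := pos_of_nef hq h₁ h₂ h₃ h₄ h₅ h₆
  have := le_two_of_nef hq h₁ h₂ h₃ h₄ h₅ h₆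
  have := ne_two_of_nef hq h₁ h₂ h₃ h₄ h₅ h₆
  omega

end Nef

end L24

/-- On the rank-4 lattice `L(24)` with Gram matrix `G` in the basis
`(L, A₁, A₂, A₃)`, the class `L` has square `2`, meets each of the six
`(−2)`-curves with multiplicity `1`, and is the unique class of square `2`
meeting all six `(−2)`-curves nonnegatively. -/
theorem stmt_9 :
    let G : Matrix (Fin 4) (Fin 4) ℤ :=
      !![2, 1, 1, 1; 1, -2, 0, 0; 1, 0, -2, 0; 1, 0, 0, -2]
    let L : Fin 4 → ℤ := ![1, 0, 0, 0]
    let A : Fin 6 → Fin 4 → ℤ :=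
      ![![0, 1, 0, 0], ![0, 0, 1, 0], ![0, 0, 0, 1],
        ![1, -1, 0, 0], ![1, 0, -1, 0], ![1, 0, 0, -1]]
    L ⬝ᵥ (G *ᵥ L) = 2 ∧
    (∀ i : Fin 6, L ⬝ᵥ (G *ᵥ A i) = 1) ∧
    (∀ D : Fin 4 → ℤ, D ⬝ᵥ (G *ᵥ D) = 2 → (∀ i : Fin 6, 0 ≤ D ⬝ᵥ (G *ᵥ A i)) →
      D = L) := by
  intro G L A
  refine ⟨by decide, by decide, fun D hD hA => ?_⟩
  have hq : D 0 ^ 2 + D 0 * (D 1 + D 2 + D 3) - (D 1 ^ 2 + D 2 ^ 2 + D 3 ^ 2) = 1 := by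
    linarith [L24.dotProduct_gram_mulVec_self D ▸ hD]
  have hnef := fun i => L24.dotProduct_gram_mulVec_curve D i ▸ hA i
  obtain ⟨h₀, h₁, h₂, h₃⟩ := L24.eq_one_zero_zero_zero_of_nef hq
    (hnef 0) (hnef 1) (hnef 2) (hnef 3) (hnef 4) (hnef 5)
  ext i
  fin_cases i <;> simp [L, h₀, h₁, h₂, h₃]
end

section
/- For integers a, b ∈ {0,1,2} and c ∈ {0,1,2,3,4}, writing x̄ = 4−x, let M(a,b,c) be the symmetric 6×6 integer matrix with rows (−2,6,a,ā,b,b̄), (6,−2,ā,a,b̄,b), (a,ā,−2,6,c,c̄), (ā,a,6,−2,c̄,c), (b,b̄,c,c̄,−2,6), (b̄,b,c̄,c,6,−2). Then the rank of M(a,b,c) (over ℚ) is at most 4, and it equals 3 if and only if a = 0, b = 0 and c = 4. -/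
/-!
Each pair of columns `(2k, 2k+1)` of `M(a,b,c)` sums to the constant column `4`, so columns
`0, 2, 4` and the constant column span the column space and `rank ≤ 4`. The principal minor on
the indices `0, 1, 2, 4` is `16 q(a,b,c)` with `q = conicMinorPoly`, so `rank = 4` unless
`q = 0`, and on the box `0 ≤ a, b ≤ 2`, `0 ≤ c ≤ 4` the only integer zero of `q` is `(0, 0, 4)`.
There column `1` is `2 · col 2 + 2 · col 4 − 3 · col 0`, and the rank is `3`.
-/

open Matrix

namespace Matrix

variable {m n k R : Type*} [CommRing R]

theorem card_le_rank_of_det_submatrix_ne_zero [IsDomain R] [Fintype n] [Fintype k]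
    [DecidableEq k] (A : Matrix m n R) (r : k → m) (c : k → n)
    (h : (A.submatrix r c).det ≠ 0) : Fintype.card k ≤ A.rank :=
  rank_of_det_ne_zero h ▸ rank_submatrix_le A r c

theorem rank_le_card_of_eq_mul [StrongRankCondition R] [Fintype n] [Fintype k]
    {A : Matrix m n R} (B : Matrix m k R) (C : Matrix k n R) (h : A = B * C) :
    A.rank ≤ Fintype.card k :=
  h ▸ (rank_mul_le_left B C).trans (rank_le_card_width B)

end Matrix

def conicIntersectionMatrix {R : Type*} [CommRing R] (a b c : R) : Matrix (Fin 6) (Fin 6) R :=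
  !![-2, 6, a, 4 - a, b, 4 - b;
     6, -2, 4 - a, a, 4 - b, b;
     a, 4 - a, -2, 6, c, 4 - c;
     4 - a, a, 6, -2, 4 - c, c;
     b, 4 - b, c, 4 - c, -2, 6;
     4 - b, b, 4 - c, c, 6, -2]

def conicMinorPoly {R : Type*} [CommRing R] (a b c : R) : R :=
  2 * a ^ 2 + 2 * b ^ 2 + 2 * c ^ 2 + a * b * c - 2 * a * b - 2 * a * c - 2 * b * c
    - 4 * a - 4 * b - 4 * c - 16

section

variable {R : Type*} [CommRing R]

theorem conicIntersectionMatrix_eq_mul (a b c : R) :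
    conicIntersectionMatrix a b c =
      (!![-2, a, b, 4; 6, 4 - a, 4 - b, 4; a, -2, c, 4; 4 - a, 6, 4 - c, 4; b, c, -2, 4;
          4 - b, 4 - c, 6, 4] : Matrix (Fin 6) (Fin 4) R) *
      (!![1, -1, 0, 0, 0, 0; 0, 0, 1, -1, 0, 0; 0, 0, 0, 0, 1, -1; 0, 1, 0, 1, 0, 1] :
          Matrix (Fin 4) (Fin 6) R) := by
  ext i j
  fin_cases i <;> fin_cases j <;>
    simp [conicIntersectionMatrix, mul_apply, Fin.sum_univ_succ] <;> ring

theorem rank_conicIntersectionMatrix_le [StrongRankCondition R] (a b c : R) :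
    (conicIntersectionMatrix a b c).rank ≤ 4 :=
  rank_le_card_of_eq_mul _ _ (conicIntersectionMatrix_eq_mul a b c)

theorem conicIntersectionMatrix_submatrix (a b c : R) :
    (conicIntersectionMatrix a b c).submatrix ![0, 1, 2, 4] ![0, 1, 2, 4] =
      !![-2, 6, a, b; 6, -2, 4 - a, 4 - b; a, 4 - a, -2, c; b, 4 - b, c, -2] := by
  ext i j
  fin_cases i <;> fin_cases j <;> rfl

theorem det_conicIntersectionMatrix_submatrix (a b c : R) :
    ((conicIntersectionMatrix a b c).submatrix ![0, 1, 2, 4] ![0, 1, 2, 4]).det =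
      16 * conicMinorPoly a b c := by
  rw [conicIntersectionMatrix_submatrix, det_succ_row_zero]
  simp [Fin.sum_univ_succ, det_fin_three, Fin.succAbove, conicMinorPoly]
  ring

theorem four_le_rank_conicIntersectionMatrix [IsDomain R] [CharZero R] {a b c : R}
    (h : conicMinorPoly a b c ≠ 0) : 4 ≤ (conicIntersectionMatrix a b c).rank := by
  refine card_le_rank_of_det_submatrix_ne_zero _ ![0, 1, 2, 4] ![0, 1, 2, 4] ?_
  rw [det_conicIntersectionMatrix_submatrix]
  exact mul_ne_zero (by norm_num) h

theorem rank_conicIntersectionMatrix_zero_zero_four [IsDomain R] [CharZero R] :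
    (conicIntersectionMatrix (0 : R) 0 4).rank = 3 := by
  refine le_antisymm (rank_le_card_of_eq_mul
    (!![-2, 0, 0; 6, 4, 4; 0, -2, 4; 4, 6, 0; 0, 4, -2; 4, 0, 6] : Matrix (Fin 6) (Fin 3) R)
    (!![1, -3, 0, -2, 0, -2; 0, 2, 1, 1, 0, 2; 0, 2, 0, 2, 1, 1] : Matrix (Fin 3) (Fin 6) R) ?_)
    (card_le_rank_of_det_submatrix_ne_zero _ ![0, 1, 2] ![0, 1, 2] ?_)
  · ext i j
    fin_cases i <;> fin_cases j <;>
      norm_num [conicIntersectionMatrix, mul_apply, Fin.sum_univ_succ]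
  · rw [det_fin_three]
    norm_num [conicIntersectionMatrix, cons_val_two, vecHead, vecTail]

end

theorem conicMinorPoly_eq_zero_iff {a b c : ℤ} (ha0 : 0 ≤ a) (ha2 : a ≤ 2) (hb0 : 0 ≤ b)
    (hb2 : b ≤ 2) (hc0 : 0 ≤ c) (hc4 : c ≤ 4) :
    conicMinorPoly a b c = 0 ↔ a = 0 ∧ b = 0 ∧ c = 4 := by
  constructor
  · intro h
    interval_cases a <;> interval_cases b <;> interval_cases c <;> simp_all [conicMinorPoly]
  · rintro ⟨rfl, rfl, rfl⟩
    rfl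

/-- The intersection matrix `M(a,b,c)` of the six `(−2)`-curves over three
`6`-tangent conics has rank at most `4`, and rank `3` iff `a = 0, b = 0, c = 4`. -/
theorem stmt_10 (a b c : ℤ)
    (ha0 : 0 ≤ a) (ha2 : a ≤ 2) (hb0 : 0 ≤ b) (hb2 : b ≤ 2)
    (hc0 : 0 ≤ c) (hc4 : c ≤ 4) :
    let M : Matrix (Fin 6) (Fin 6) ℚ :=
      !![-2, 6, (a : ℚ), 4 - a, (b : ℚ), 4 - b;
         6, -2, 4 - a, (a : ℚ), 4 - b, (b : ℚ);
         (a : ℚ), 4 - a, -2, 6, (c : ℚ), 4 - c;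
         4 - a, (a : ℚ), 6, -2, 4 - c, (c : ℚ);
         (b : ℚ), 4 - b, (c : ℚ), 4 - c, -2, 6;
         4 - b, (b : ℚ), 4 - c, (c : ℚ), 6, -2]
    M.rank ≤ 4 ∧ (M.rank = 3 ↔ (a = 0 ∧ b = 0 ∧ c = 4)) := by
  show (conicIntersectionMatrix (a : ℚ) b c).rank ≤ 4 ∧
    ((conicIntersectionMatrix (a : ℚ) b c).rank = 3 ↔ _)
  refine ⟨rank_conicIntersectionMatrix_le _ _ _, fun h3 => ?_, ?_⟩
  · by_contra hne
    have hq : ((conicMinorPoly a b c : ℤ) : ℚ) ≠ 0 :=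
      Int.cast_ne_zero.mpr ((conicMinorPoly_eq_zero_iff ha0 ha2 hb0 hb2 hc0 hc4).not.mpr hne)
    push_cast [conicMinorPoly] at hq
    have := four_le_rank_conicIntersectionMatrix hq
    omega
  · rintro ⟨rfl, rfl, rfl⟩
    simpa only [Int.cast_zero, Int.cast_ofNat] using
      rank_conicIntersectionMatrix_zero_zero_four (R := ℚ)
end

section
/- For integers u, v ∈ {0,1,2,3} and a ∈ {0,1,…,9}, writing x̄ = 6−x and ã = 9−a, let M(u,v,a) be the symmetric 6×6 integer matrix with rows (−2,6,u,ū,v̄,v), (6,−2,ū,u,v,v̄), (u,ū,−2,11,ã,a), (ū,u,11,−2,a,ã), (v̄,v,ã,a,−2,11), (v,v̄,a,ã,11,−2). Then M(u,v,a) has rank 3 (over ℚ) if and only if u = 1, v = 1 and a = 9. -/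
/-!
For `(u, v, a) ≠ (1, 1, 9)` the principal `4 × 4` minor on rows and columns
`{0, 1, 2, 4}` is a polynomial in `u, v, a` that vanishes at no other point of the box, so the
rank is at least `4`. For `(u, v, a) = (1, 1, 9)` the first three rows span the row space while
the leading `3 × 3` minor is nonzero, so the rank is exactly `3`.
-/

open Matrix

theorem Matrix.card_le_rank_of_det_submatrix_ne_zero_s12 {R m n k : Type*} [CommRing R] [IsDomain R]
    [Fintype n] [Fintype k] [DecidableEq k] (A : Matrix m n R) (r : k → m) (c : k → n)
    (h : (A.submatrix r c).det ≠ 0) : Fintype.card k ≤ A.rank :=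
  (rank_of_det_ne_zero h).symm.trans_le (rank_submatrix_le A r c)

def intersectionMatrix (u v a : ℚ) : Matrix (Fin 6) (Fin 6) ℚ :=
  !![-2, 6, u, 6 - u, 6 - v, v;
     6, -2, 6 - u, u, v, 6 - v;
     u, 6 - u, -2, 11, 9 - a, a;
     6 - u, u, 11, -2, a, 9 - a;
     6 - v, v, 9 - a, a, -2, 11;
     v, 6 - v, a, 9 - a, 11, -2]

def minorPolynomial (u v a : ℤ) : ℤ :=
  52 * u ^ 2 + 52 * v ^ 2 + 32 * a ^ 2 + 16 * u * v * a - 48 * a * u - 48 * a * v - 72 * u * v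
    - 96 * u - 96 * v - 144 * a - 416

theorem det_intersectionMatrix_submatrix (u v a : ℤ) :
    ((intersectionMatrix u v a).submatrix ![0, 1, 2, 4] ![0, 1, 2, 4]).det =
      minorPolynomial u v a := by
  have hsub : (intersectionMatrix u v a).submatrix ![0, 1, 2, 4] ![0, 1, 2, 4] =
      !![-2, 6, (u : ℚ), 6 - v;
         6, -2, 6 - u, (v : ℚ);
         (u : ℚ), 6 - u, -2, 9 - a;
         6 - v, (v : ℚ), 9 - a, -2] := by
    ext i j
    fin_cases i <;> fin_cases j <;> rfl
  rw [hsub, det_succ_row_zero, Fin.sum_univ_four]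
  simp only [Nat.succ_eq_add_one, Nat.reduceAdd, Fin.isValue, Fin.coe_ofNat_eq_mod, Nat.zero_mod,
    pow_zero, of_apply, cons_val', cons_val_zero, cons_val_fin_one, mul_neg, one_mul,
    Fin.succAbove_zero, det_fin_three, submatrix_apply, Fin.succ_zero_eq_one, cons_val_one,
    Fin.succ_one_eq_two, cons_val, neg_mul, neg_neg, Fin.reduceSucc, sub_neg_eq_add, Nat.one_mod,
    pow_one, Fin.succAbove, Fin.castSucc_zero, zero_lt_one, ↓reduceIte, Fin.castSucc_one,
    lt_self_iff_false, Fin.reduceCastSucc, Fin.lt_one_iff, Fin.reduceEq, Nat.reduceMod, even_two,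
    Even.neg_pow, one_pow, Fin.reduceLT, Nat.mod_succ, minorPolynomial, Int.cast_sub, Int.cast_add,
    Int.cast_mul, Int.cast_ofNat, Int.cast_pow]
  ring

theorem minorPolynomial_ne_zero {u v a : ℤ} (hu0 : 0 ≤ u) (hu3 : u ≤ 3) (hv0 : 0 ≤ v)
    (hv3 : v ≤ 3) (ha0 : 0 ≤ a) (ha9 : a ≤ 9) (h : ¬(u = 1 ∧ v = 1 ∧ a = 9)) :
    minorPolynomial u v a ≠ 0 := by
  unfold minorPolynomial
  interval_cases u <;> interval_cases v <;> interval_cases a <;> omega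

theorem four_le_rank_intersectionMatrix {u v a : ℤ} (hu0 : 0 ≤ u) (hu3 : u ≤ 3) (hv0 : 0 ≤ v)
    (hv3 : v ≤ 3) (ha0 : 0 ≤ a) (ha9 : a ≤ 9) (h : ¬(u = 1 ∧ v = 1 ∧ a = 9)) :
    4 ≤ (intersectionMatrix u v a).rank := by
  have hminor := (intersectionMatrix u v a).card_le_rank_of_det_submatrix_ne_zero_s12
    ![0, 1, 2, 4] ![0, 1, 2, 4] (by
      rw [det_intersectionMatrix_submatrix]
      exact_mod_cast minorPolynomial_ne_zero hu0 hu3 hv0 hv3 ha0 ha9 h)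
  simpa using hminor

theorem intersectionMatrix_one_one_nine_eq_mul :
    intersectionMatrix 1 1 9 =
      (!![1, 0, 0; 0, 1, 0; 0, 0, 1; 3/2, 3/2, -1; -1/2, 1/2, 1; 2, 1, -1] :
        Matrix (Fin 6) (Fin 3) ℚ) *
      (!![-2, 6, 1, 5, 5, 1; 6, -2, 5, 1, 1, 5; 1, 5, -2, 11, 0, 9] :
        Matrix (Fin 3) (Fin 6) ℚ) := by
  ext i j
  fin_cases i <;> fin_cases j <;>
    norm_num [intersectionMatrix, mul_apply, Fin.sum_univ_succ]

theorem rank_intersectionMatrix_one_one_nine : (intersectionMatrix 1 1 9).rank = 3 := by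
  refine le_antisymm ?_ ?_
  · rw [intersectionMatrix_one_one_nine_eq_mul]
    exact (rank_mul_le_left _ _).trans (rank_le_width _)
  · have hminor := (intersectionMatrix 1 1 9).card_le_rank_of_det_submatrix_ne_zero_s12
      ![0, 1, 2] ![0, 1, 2] (by
        rw [det_fin_three]
        simp only [intersectionMatrix, submatrix_apply, of_apply, cons_val', cons_val_zero,
          cons_val_one, cons_val, cons_val_fin_one]
        norm_num)
    simpa using hminor

/-- The intersection matrix `M(u,v,a)` of the six `(−2)`-curves over a `6`-tangent
conic and two cuspidal cubics has rank `3` iff `u = 1, v = 1, a = 9`. -/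
theorem stmt_12 (u v a : ℤ)
    (hu0 : 0 ≤ u) (hu3 : u ≤ 3) (hv0 : 0 ≤ v) (hv3 : v ≤ 3)
    (ha0 : 0 ≤ a) (ha9 : a ≤ 9) :
    let M : Matrix (Fin 6) (Fin 6) ℚ :=
      !![-2, 6, (u : ℚ), 6 - u, 6 - v, (v : ℚ);
         6, -2, 6 - u, (u : ℚ), (v : ℚ), 6 - v;
         (u : ℚ), 6 - u, -2, 11, 9 - a, (a : ℚ);
         6 - u, (u : ℚ), 11, -2, (a : ℚ), 9 - a;
         6 - v, (v : ℚ), 9 - a, (a : ℚ), -2, 11;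
         (v : ℚ), 6 - v, (a : ℚ), 9 - a, 11, -2]
    M.rank = 3 ↔ (u = 1 ∧ v = 1 ∧ a = 9) := by
  show (intersectionMatrix u v a).rank = 3 ↔ _
  constructor
  · intro hrank
    by_contra h
    have := four_le_rank_intersectionMatrix hu0 hu3 hv0 hv3 ha0 ha9 h
    omega
  · rintro ⟨rfl, rfl, rfl⟩
    exact_mod_cast rank_intersectionMatrix_one_one_nine
end

section
/- Let G = [[−2,3,0,0],[3,−2,1,1],[0,1,−2,1],[0,1,1,−2]]. There exists a matrix U ∈ GL₄(ℤ) (i.e., an integer 4×4 matrix with determinant ±1) such that UᵀGU = [[0,3,0,0],[3,−2,0,0],[0,0,−2,1],[0,0,1,−2]]. -/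
/-- The lattice generated by the `(−2)`-curves `B₁, B₂, B₃, B₅` (case `M₂`,
Vinberg's `L(25)`) is isomorphic to `[[0,3],[3,−2]] ⊕ A₂(−1)`: there is a
unimodular integral change of basis carrying one Gram matrix to the other. -/
theorem stmt_14 :
    ∃ U : Matrix (Fin 4) (Fin 4) ℤ, (U.det = 1 ∨ U.det = -1) ∧
      U.transpose * !![-2, 3, 0, 0; 3, -2, 1, 1; 0, 1, -2, 1; 0, 1, 1, -2] * U =
        !![0, 3, 0, 0; 3, -2, 0, 0; 0, 0, -2, 1; 0, 0, 1, -2] := by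
  -- `B₃, B₅` already span `A₂(−1)`, and `B₂ + B₃ + B₅` is orthogonal to both, isotropic and
  -- meets `B₁` in `3`; the columns of `U` are the basis `B₂ + B₃ + B₅, B₁, B₃, B₅`.
  refine ⟨!![0, 1, 0, 0; 1, 0, 0, 0; 1, 0, 1, 0; 1, 0, 0, 1], Or.inr ?_, ?_⟩ <;> decide
end

section
/- Let G = diag(6,−2,−2) (the Gram matrix of the lattice S₁). For every x ∈ ℚ³, if Gx ∈ ℤ³ and xᵀGx ∈ 2ℤ, then x ∈ ℤ³. -/
/-!
Write `Gx = (a, b, c) ∈ ℤ³`, so `x = (a/6, -b/2, -c/2)` and `xᵀGx = a²/6 - b²/2 - c²/2`.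
Evenness of this number means `a² - 3b² - 3c² ≡ 0 (mod 12)`. Modulo `3` this gives `a = 3t`,
and then `3t² ≡ b² + c² (mod 4)`; as squares are `0` or `1` modulo `4`, all of `t, b, c` are
even, i.e. `6 ∣ a`, `2 ∣ b`, `2 ∣ c`, which is integrality of `x`.
-/

open Matrix

theorem Int.sq_emod_four_eq_emod_two (u : ℤ) : u ^ 2 % 4 = u % 2 := by
  rcases Int.even_or_odd' u with ⟨k, rfl | rfl⟩
  · have : (2 * k) ^ 2 = 4 * k ^ 2 := by ring
    omega
  · have : (2 * k + 1) ^ 2 = 4 * (k ^ 2 + k) + 1 := by ring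
    omega

theorem dvd_of_sq_sub_three_mul_sq_sub_three_mul_sq {a b c m : ℤ}
    (h : a ^ 2 - 3 * b ^ 2 - 3 * c ^ 2 = 12 * m) : 6 ∣ a ∧ 2 ∣ b ∧ 2 ∣ c := by
  obtain ⟨t, rfl⟩ : 3 ∣ a :=
    Int.prime_three.dvd_of_dvd_pow (n := 2) ⟨b ^ 2 + c ^ 2 + 4 * m, by linarith⟩
  have h4 : 3 * t ^ 2 - b ^ 2 - c ^ 2 = 4 * m := by linarith
  have ht := Int.sq_emod_four_eq_emod_two t
  have hb := Int.sq_emod_four_eq_emod_two b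
  have hc := Int.sq_emod_four_eq_emod_two c
  rcases Int.emod_two_eq_zero_or_one t with ht' | ht' <;> omega

theorem Rat.exists_intCast_eq_of_mul_eq {q : ℚ} {d n : ℤ} (hd : d ≠ 0) (hdn : d ∣ n)
    (h : d * q = n) : ∃ m : ℤ, q = m := by
  obtain ⟨k, rfl⟩ := hdn
  refine ⟨k, mul_left_cancel₀ (Int.cast_ne_zero.mpr hd) ?_⟩
  rw [h]
  push_cast
  rfl

theorem Matrix.dotProduct_diagonal_mulVec {n R : Type*} [Fintype n] [DecidableEq n]
    [CommSemiring R] (d x : n → R) : x ⬝ᵥ (diagonal d *ᵥ x) = ∑ i, d i * x i ^ 2 := by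
  simp only [dotProduct, mulVec_diagonal]
  exact Finset.sum_congr rfl fun i _ ↦ by ring

theorem gram_S₁_eq_diagonal :
    (!![6, 0, 0; 0, -2, 0; 0, 0, -2] : Matrix (Fin 3) (Fin 3) ℚ) = diagonal ![6, -2, -2] := by
  ext i j
  fin_cases i <;> fin_cases j <;> rfl

/-- The discriminant group of the lattice `S₁ = ⟨6⟩ ⊕ ⟨−2⟩ ⊕ ⟨−2⟩` contains no
non-trivial isotropic element: any `x ∈ ℚ³` with `Gx ∈ ℤ³` and `xᵀGx ∈ 2ℤ`
already lies in `ℤ³`. -/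
theorem stmt_15 (x : Fin 3 → ℚ)
    (h1 : ∀ i, ∃ m : ℤ,
      ((!![6, 0, 0; 0, -2, 0; 0, 0, -2] : Matrix (Fin 3) (Fin 3) ℚ) *ᵥ x) i = m)
    (h2 : ∃ m : ℤ,
      x ⬝ᵥ ((!![6, 0, 0; 0, -2, 0; 0, 0, -2] : Matrix (Fin 3) (Fin 3) ℚ) *ᵥ x)
        = 2 * m) :
    ∀ i, ∃ m : ℤ, x i = m := by
  simp only [gram_S₁_eq_diagonal, mulVec_diagonal, dotProduct_diagonal_mulVec] at h1 h2
  obtain ⟨a, ha⟩ : ∃ a : ℤ, 6 * x 0 = a := h1 0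
  obtain ⟨b, hb⟩ : ∃ b : ℤ, -2 * x 1 = b := h1 1
  obtain ⟨c, hc⟩ : ∃ c : ℤ, -2 * x 2 = c := h1 2
  obtain ⟨m, hm⟩ : ∃ m : ℤ, 6 * x 0 ^ 2 + -2 * x 1 ^ 2 + -2 * x 2 ^ 2 = 2 * m := by
    rw [Fin.sum_univ_three] at h2
    exact h2
  have hform : a ^ 2 - 3 * b ^ 2 - 3 * c ^ 2 = 12 * m := by
    have : (a : ℚ) ^ 2 - 3 * b ^ 2 - 3 * c ^ 2 = 12 * m := by
      rw [← ha, ← hb, ← hc]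
      linear_combination 6 * hm
    exact_mod_cast this
  obtain ⟨ha6, hb2, hc2⟩ := dvd_of_sq_sub_three_mul_sq_sub_three_mul_sq hform
  intro i
  fin_cases i
  · exact Rat.exists_intCast_eq_of_mul_eq (d := 6) (by norm_num) ha6 (by exact_mod_cast ha)
  · exact Rat.exists_intCast_eq_of_mul_eq (d := -2) (by norm_num) (neg_dvd.mpr hb2)
      (by exact_mod_cast hb)
  · exact Rat.exists_intCast_eq_of_mul_eq (d := -2) (by norm_num) (neg_dvd.mpr hc2)
      (by exact_mod_cast hc)
end

section
/- Let G = [[−2,1,3],[1,−2,1],[3,1,−2]] (the Gram matrix of the lattice S₄). For every x ∈ ℚ³, if Gx ∈ ℤ³ and xᵀGx ∈ 2ℤ, then x ∈ ℤ³. -/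
/-!
With `adj` the adjugate of the Gram matrix `G` (so `adj * G = 20`), a dual vector `x` with
`y := G x ∈ ℤ³` satisfies `20 x = adj y` and `20 xᵀ G x = yᵀ adj y`. Isotropy of `x` thus says
`40 ∣ yᵀ adj y`, and a finite check modulo `8` and modulo `5` shows that this forces
`20 ∣ adj y`, i.e. `x ∈ ℤ³`.
-/

open Matrix

def s4Gram (R : Type*) [Ring R] : Matrix (Fin 3) (Fin 3) R := !![-2, 1, 3; 1, -2, 1; 3, 1, -2]

def s4Adjugate (R : Type*) [Ring R] : Matrix (Fin 3) (Fin 3) R := !![3, 5, 7; 5, -5, 5; 7, 5, 3]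

section

variable (R : Type*) [Ring R]

lemma s4Adjugate_mul_s4Gram : s4Adjugate R * s4Gram R = (20 : R) • 1 := by
  ext i j
  fin_cases i <;> fin_cases j <;> simp [s4Adjugate, s4Gram, mul_apply, Fin.sum_univ_three] <;>
    norm_num

variable {R} in
lemma s4Adjugate_mulVec_s4Gram_mulVec (x : Fin 3 → R) :
    s4Adjugate R *ᵥ (s4Gram R *ᵥ x) = (20 : R) • x := by
  rw [mulVec_mulVec, s4Adjugate_mul_s4Gram, smul_mulVec, one_mulVec]

lemma s4Adjugate_map_intCast : (s4Adjugate ℤ).map (Int.cast : ℤ → R) = s4Adjugate R := by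
  ext i j
  fin_cases i <;> fin_cases j <;> simp [s4Adjugate]

lemma intCast_s4Adjugate_mulVec (y : Fin 3 → ℤ) (i : Fin 3) :
    (((s4Adjugate ℤ *ᵥ y) i : ℤ) : R) = (s4Adjugate R *ᵥ ((↑) ∘ y)) i := by
  have h := (Int.castRingHom R).map_mulVec (s4Adjugate ℤ) y i
  rwa [Int.coe_castRingHom, s4Adjugate_map_intCast] at h

lemma intCast_dotProduct_s4Adjugate_mulVec (y : Fin 3 → ℤ) :
    ((y ⬝ᵥ (s4Adjugate ℤ *ᵥ y) : ℤ) : R) = ((↑) ∘ y) ⬝ᵥ (s4Adjugate R *ᵥ ((↑) ∘ y)) := by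
  rw [← eq_intCast (Int.castRingHom R), RingHom.map_dotProduct]
  congr 1
  ext i
  exact intCast_s4Adjugate_mulVec R y i

end

set_option maxRecDepth 10000 in
lemma two_mul_s4Adjugate_mulVec_eq_zero_of_zmod_eight (z : Fin 3 → ZMod 8)
    (hz : z ⬝ᵥ (s4Adjugate _ *ᵥ z) = 0) (i : Fin 3) : 2 * (s4Adjugate _ *ᵥ z) i = 0 := by
  revert z i
  unfold s4Adjugate
  decide

set_option maxRecDepth 10000 in
lemma s4Adjugate_mulVec_eq_zero_of_zmod_five (z : Fin 3 → ZMod 5)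
    (hz : z ⬝ᵥ (s4Adjugate _ *ᵥ z) = 0) (i : Fin 3) : (s4Adjugate _ *ᵥ z) i = 0 := by
  revert z i
  unfold s4Adjugate
  decide

lemma twenty_dvd_s4Adjugate_mulVec (y : Fin 3 → ℤ) (hy : 40 ∣ y ⬝ᵥ (s4Adjugate ℤ *ᵥ y))
    (i : Fin 3) : 20 ∣ (s4Adjugate ℤ *ᵥ y) i := by
  have h8 : (8 : ℤ) ∣ 2 * (s4Adjugate ℤ *ᵥ y) i := by
    refine (ZMod.intCast_zmod_eq_zero_iff_dvd _ 8).mp ?_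
    rw [Int.cast_mul, intCast_s4Adjugate_mulVec]
    refine two_mul_s4Adjugate_mulVec_eq_zero_of_zmod_eight _ ?_ i
    rw [← intCast_dotProduct_s4Adjugate_mulVec]
    exact (ZMod.intCast_zmod_eq_zero_iff_dvd _ 8).mpr ((by norm_num : (8 : ℤ) ∣ 40).trans hy)
  have h5 : (5 : ℤ) ∣ (s4Adjugate ℤ *ᵥ y) i := by
    refine (ZMod.intCast_zmod_eq_zero_iff_dvd _ 5).mp ?_
    rw [intCast_s4Adjugate_mulVec]
    refine s4Adjugate_mulVec_eq_zero_of_zmod_five _ ?_ i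
    rw [← intCast_dotProduct_s4Adjugate_mulVec]
    exact (ZMod.intCast_zmod_eq_zero_iff_dvd _ 5).mpr ((by norm_num : (5 : ℤ) ∣ 40).trans hy)
  omega

/-- The discriminant group of the lattice `S₄` contains no non-trivial isotropic
element: any `x ∈ ℚ³` with `Gx ∈ ℤ³` and `xᵀGx ∈ 2ℤ` already lies in `ℤ³`. -/
theorem stmt_16 (x : Fin 3 → ℚ)
    (h1 : ∀ i, ∃ m : ℤ,
      ((!![-2, 1, 3; 1, -2, 1; 3, 1, -2] : Matrix (Fin 3) (Fin 3) ℚ) *ᵥ x) i = m)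
    (h2 : ∃ m : ℤ,
      x ⬝ᵥ ((!![-2, 1, 3; 1, -2, 1; 3, 1, -2] : Matrix (Fin 3) (Fin 3) ℚ) *ᵥ x)
        = 2 * m) :
    ∀ i, ∃ m : ℤ, x i = m := by
  change ∀ i, ∃ m : ℤ, (s4Gram ℚ *ᵥ x) i = m at h1
  change ∃ m : ℤ, x ⬝ᵥ (s4Gram ℚ *ᵥ x) = 2 * m at h2
  choose y hy using h1
  obtain ⟨m, hm⟩ := h2
  have hGx : s4Gram ℚ *ᵥ x = (↑) ∘ y := funext hy
  have h20x : (20 : ℚ) • x = s4Adjugate ℚ *ᵥ ((↑) ∘ y) := by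
    rw [← hGx, s4Adjugate_mulVec_s4Gram_mulVec]
  have hq : y ⬝ᵥ (s4Adjugate ℤ *ᵥ y) = 40 * m := by
    have h : ((y ⬝ᵥ (s4Adjugate ℤ *ᵥ y) : ℤ) : ℚ) = ((40 * m : ℤ) : ℚ) := by
      rw [intCast_dotProduct_s4Adjugate_mulVec, ← h20x, ← hGx, dotProduct_smul, dotProduct_comm,
        hm, smul_eq_mul]
      push_cast
      ring
    exact_mod_cast h
  intro i
  obtain ⟨k, hk⟩ := twenty_dvd_s4Adjugate_mulVec y ⟨m, hq⟩ i
  refine ⟨k, ?_⟩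
  have h20xi := congrFun h20x i
  rw [Pi.smul_apply, smul_eq_mul, ← intCast_s4Adjugate_mulVec, hk] at h20xi
  push_cast at h20xi
  linarith
end

section
/- Let G = [[4,0,0],[0,−2,1],[0,1,−2]] (the Gram matrix of the lattice S₅). For every x ∈ ℚ³, if Gx ∈ ℤ³ and xᵀGx ∈ 2ℤ, then x ∈ ℤ³. -/
/-!
Write `y = Gx = (m₀, m₁, m₂) ∈ ℤ³`. Inverting `G` gives `x = (m₀/4, -(2m₁+m₂)/3, -(m₁+2m₂)/3)`,
and the norm becomes `xᵀGx = yᵀG⁻¹y = m₀²/4 - 2(m₁² + m₁m₂ + m₂²)/3`. If this is even, then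
`3m₀² - 8(m₁² + m₁m₂ + m₂²) ∈ 24ℤ`. Reducing mod 3 gives `3 ∣ (m₁ - m₂)²`, since
`m₁² + m₁m₂ + m₂² = (m₁ - m₂)² + 3m₁m₂`, and reducing mod 8 gives `8 ∣ 3m₀²`. Hence `4 ∣ m₀` and
`3 ∣ m₁ - m₂`, which is exactly integrality of `x`.
-/

open Matrix

def gramS5 : Matrix (Fin 3) (Fin 3) ℚ := !![4, 0, 0; 0, -2, 1; 0, 1, -2]

lemma gramS5_mulVec (x : Fin 3 → ℚ) :
    gramS5 *ᵥ x = ![4 * x 0, -2 * x 1 + x 2, x 1 - 2 * x 2] := by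
  ext i
  fin_cases i <;> simp [gramS5, mulVec, dotProduct, Fin.sum_univ_three, sub_eq_add_neg]

lemma twelve_mul_dotProduct_gramS5_mulVec (x : Fin 3 → ℚ) :
    12 * (x ⬝ᵥ gramS5 *ᵥ x) = 3 * (gramS5 *ᵥ x) 0 ^ 2
      - 8 * ((gramS5 *ᵥ x) 1 ^ 2 + (gramS5 *ᵥ x) 1 * (gramS5 *ᵥ x) 2 + (gramS5 *ᵥ x) 2 ^ 2) := by
  simp [gramS5_mulVec, dotProduct, Fin.sum_univ_three]
  ring

lemma four_dvd_of_eight_dvd_sq {a : ℤ} (h : 8 ∣ a ^ 2) : 4 ∣ a := by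
  obtain ⟨n, rfl⟩ : 2 ∣ a := Int.prime_two.dvd_of_dvd_pow (n := 2) (dvd_trans (by norm_num) h)
  have : 2 ∣ n ^ 2 := by
    rw [mul_pow, show (8 : ℤ) = 2 ^ 2 * 2 by norm_num] at h
    exact (mul_dvd_mul_iff_left (by norm_num)).mp h
  exact mul_dvd_mul_left 2 (Int.prime_two.dvd_of_dvd_pow this)

lemma four_dvd_of_discr_eq {a b c k : ℤ} (h : 3 * a ^ 2 - 8 * (b ^ 2 + b * c + c ^ 2) = 24 * k) :
    4 ∣ a := by
  refine four_dvd_of_eight_dvd_sq ⟨3 * (b ^ 2 + b * c + c ^ 2) + 9 * k - a ^ 2, ?_⟩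
  linear_combination 3 * h

lemma three_dvd_sub_of_discr_eq {a b c k : ℤ}
    (h : 3 * a ^ 2 - 8 * (b ^ 2 + b * c + c ^ 2) = 24 * k) : 3 ∣ b - c := by
  refine Int.prime_three.dvd_of_dvd_pow (n := 2)
    ⟨3 * (b ^ 2 + b * c + c ^ 2) - a ^ 2 + 8 * k - b * c, ?_⟩
  linear_combination h

/-- The discriminant group of the lattice `S₅` contains no non-trivial isotropic
element: any `x ∈ ℚ³` with `Gx ∈ ℤ³` and `xᵀGx ∈ 2ℤ` already lies in `ℤ³`. -/
theorem stmt_17 (x : Fin 3 → ℚ)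
    (h1 : ∀ i, ∃ m : ℤ,
      ((!![4, 0, 0; 0, -2, 1; 0, 1, -2] : Matrix (Fin 3) (Fin 3) ℚ) *ᵥ x) i = m)
    (h2 : ∃ m : ℤ,
      x ⬝ᵥ ((!![4, 0, 0; 0, -2, 1; 0, 1, -2] : Matrix (Fin 3) (Fin 3) ℚ) *ᵥ x)
        = 2 * m) :
    ∀ i, ∃ m : ℤ, x i = m := by
  choose m hm using h1
  obtain ⟨k, hk⟩ := h2
  change ∀ i, (gramS5 *ᵥ x) i = m i at hm
  change x ⬝ᵥ gramS5 *ᵥ x = 2 * k at hk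
  have hdiscr : 3 * m 0 ^ 2 - 8 * (m 1 ^ 2 + m 1 * m 2 + m 2 ^ 2) = 24 * k := by
    have h12 := twelve_mul_dotProduct_gramS5_mulVec x
    rw [hk, hm, hm, hm] at h12
    exact_mod_cast (by linear_combination -h12 :
      (3 * m 0 ^ 2 - 8 * (m 1 ^ 2 + m 1 * m 2 + m 2 ^ 2) : ℚ) = 24 * k)
  obtain ⟨j, hj⟩ := four_dvd_of_discr_eq hdiscr
  obtain ⟨d, hd⟩ := three_dvd_sub_of_discr_eq hdiscr
  have hd' : (m 1 : ℚ) - m 2 = 3 * d := by exact_mod_cast hd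
  simp only [gramS5_mulVec] at hm
  have h0 : 4 * x 0 = m 0 := hm 0
  have h1 : -2 * x 1 + x 2 = m 1 := hm 1
  have h2 : x 1 - 2 * x 2 = m 2 := hm 2
  intro i
  fin_cases i
  · exact ⟨j, by push_cast [hj] at h0 ⊢; linarith⟩
  · exact ⟨d - m 1, by push_cast; linarith⟩
  · exact ⟨-(m 2 + d), by push_cast; linarith⟩
end

section
/- Equip ℤ³ with the bilinear form x·y = xᵀGy, where G = [[−2,1,7],[1,−2,1],[7,1,−2]]. Let g, h : ℤ³ → ℤ³ be the linear maps given (on the standard basis e₁, e₂, e₃) by g(e₁)=e₂, g(e₂)=e₃, g(e₃)=(1,−2,2) and h(e₁)=e₂, h(e₂)=e₁, h(e₃)=(2,−2,1). Then g and h are isometries of the form (i.e., their matrices M satisfy MᵀGM = G), g has order 6, h has order 2, h∘g∘h = g⁻¹, and the subgroup of GL₃(ℤ) generated by g and h is a dihedral group of order 12. -/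
open Matrix

/-!
The relations `gⁿ = h² = 1`, `hgh = g⁻¹` let `r i ↦ gⁱ`, `sr i ↦ h gⁱ` define a homomorphism
from the dihedral group `D_n` onto `⟨g, h⟩`. Its kernel is trivial when `g` has order exactly
`n` and `h` is not a power of `g`. For the two isometries of `S₂` the latter holds because
`det g = 1` while `det h = -1`; the relations themselves are finite matrix computations.
-/

section Conjugation

variable {G : Type*} [Group G] {g h : G}

theorem pow_mul_eq_mul_inv_pow (hh : h ^ 2 = 1) (hgh : h * g * h = g⁻¹) (k : ℕ) :
    g ^ k * h = h * (g ^ k)⁻¹ := by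
  have h_inv : h⁻¹ = h := inv_eq_of_mul_eq_one_right (by rwa [← sq])
  have hconj : h * g ^ k * h = (g ^ k)⁻¹ := by
    have := conj_pow (a := h) (b := g) (i := k)
    rwa [h_inv, hgh, inv_pow, eq_comm] at this
  rw [← hconj, ← mul_assoc, ← mul_assoc, ← sq, hh, one_mul]

end Conjugation

namespace DihedralGroup

variable {n : ℕ} {G : Type*} [Group G] {g h : G}

theorem pow_val_natCast (hg : g ^ n = 1) (a : ℕ) : g ^ (a : ZMod n).val = g ^ a := by
  rw [ZMod.val_natCast, ← pow_eq_pow_mod _ hg]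

variable [NeZero n]

theorem pow_val_add (hg : g ^ n = 1) (i j : ZMod n) :
    g ^ (i + j).val = g ^ i.val * g ^ j.val := by
  rw [ZMod.val_add, ← pow_eq_pow_mod _ hg, pow_add]

theorem pow_val_neg (hg : g ^ n = 1) (i : ZMod n) : g ^ (-i).val = (g ^ i.val)⁻¹ := by
  rw [eq_inv_iff_mul_eq_one, ← pow_val_add hg, neg_add_cancel, ZMod.val_zero, pow_zero]

variable (hg : g ^ n = 1) (hh : h ^ 2 = 1) (hgh : h * g * h = g⁻¹)

def lift : DihedralGroup n →* G where
  toFun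
    | r i => g ^ i.val
    | sr i => h * g ^ i.val
  map_one' := by rw [one_def]; simp
  map_mul' := by
    have key := pow_mul_eq_mul_inv_pow hh hgh
    rintro (i | i) (j | j)
    · show g ^ (i + j).val = g ^ i.val * g ^ j.val
      exact pow_val_add hg i j
    · show h * g ^ (j - i).val = g ^ i.val * (h * g ^ j.val)
      rw [sub_eq_neg_add, pow_val_add hg, pow_val_neg hg, ← mul_assoc (g ^ _), key, mul_assoc]
    · show h * g ^ (i + j).val = h * g ^ i.val * g ^ j.val
      rw [pow_val_add hg, mul_assoc]
    · show g ^ (j - i).val = h * g ^ i.val * (h * g ^ j.val)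
      rw [sub_eq_neg_add, pow_val_add hg, pow_val_neg hg, mul_assoc h, ← mul_assoc (g ^ _), key,
        ← mul_assoc, ← mul_assoc, ← sq, hh, one_mul]

@[simp]
theorem lift_r (i : ZMod n) : lift hg hh hgh (r i) = g ^ i.val := rfl

@[simp]
theorem lift_sr (i : ZMod n) : lift hg hh hgh (sr i) = h * g ^ i.val := rfl

theorem range_lift : (lift hg hh hgh).range = Subgroup.closure {g, h} := by
  have hg_mem : g ∈ Subgroup.closure {g, h} := Subgroup.subset_closure (by simp)
  have hh_mem : h ∈ Subgroup.closure {g, h} := Subgroup.subset_closure (by simp)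
  apply le_antisymm
  · rintro _ ⟨i | i, rfl⟩
    · exact pow_mem hg_mem _
    · exact mul_mem hh_mem (pow_mem hg_mem _)
  · rw [Subgroup.closure_le]
    rintro x (rfl | rfl)
    · exact ⟨r 1, by simpa using pow_val_natCast hg 1⟩
    · exact ⟨sr 0, by simp⟩

theorem lift_injective (hord : orderOf g = n) (h_notMem : h ∉ Subgroup.zpowers g) :
    Function.Injective (lift hg hh hgh) := by
  rw [injective_iff_map_eq_one]
  rintro (i | i) hi
  · have hdvd : orderOf g ∣ i.val := orderOf_dvd_of_pow_eq_one hi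
    rw [hord] at hdvd
    rw [one_def, (ZMod.val_eq_zero i).mp (Nat.eq_zero_of_dvd_of_lt hdvd (ZMod.val_lt i))]
  · refine absurd ?_ h_notMem
    rw [eq_inv_of_mul_eq_one_left hi]
    exact inv_mem (pow_mem (Subgroup.mem_zpowers g) _)

noncomputable def closurePairEquiv (hord : orderOf g = n) (h_notMem : h ∉ Subgroup.zpowers g) :
    Subgroup.closure {g, h} ≃* DihedralGroup n :=
  (MulEquiv.subgroupCongr (range_lift hg hh hgh)).symm.trans
    (MonoidHom.ofInjective (lift_injective hg hh hgh hord h_notMem)).symm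

end DihedralGroup

def hexagonRotation : GL (Fin 3) ℤ :=
  ⟨!![0, 0, 1; 1, 0, -2; 0, 1, 2], !![2, 1, 0; -2, 0, 1; 1, 0, 0], by decide, by decide⟩

def hexagonReflection : GL (Fin 3) ℤ :=
  ⟨!![0, 1, 2; 1, 0, -2; 0, 0, 1], !![0, 1, 2; 1, 0, -2; 0, 0, 1], by decide, by decide⟩

theorem orderOf_hexagonRotation : orderOf hexagonRotation = 6 :=
  (orderOf_eq_iff (by norm_num)).mpr ⟨by decide, by decide⟩

theorem orderOf_hexagonReflection : orderOf hexagonReflection = 2 :=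
  orderOf_eq_prime (by decide) (by decide)

theorem hexagonReflection_mul_hexagonRotation_mul_hexagonReflection :
    hexagonReflection * hexagonRotation * hexagonReflection = hexagonRotation⁻¹ := by
  decide

theorem hexagonReflection_notMem_zpowers :
    hexagonReflection ∉ Subgroup.zpowers hexagonRotation := by
  rintro ⟨k, hk⟩
  have hdet := congrArg GeneralLinearGroup.det hk
  have hdet_rot : GeneralLinearGroup.det hexagonRotation = 1 := by decide
  have hdet_refl : GeneralLinearGroup.det hexagonReflection = -1 := by decide
  rw [map_zpow, hdet_rot, _root_.one_zpow, hdet_refl] at hdet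
  exact absurd hdet (by decide)

/-- The isometries `g, h` of the lattice `S₂` permuting the hexagon of six
`(−2)`-classes: `g` has order `6`, `h` has order `2`, `hgh = g⁻¹`, and they
generate a dihedral subgroup of `GL₃(ℤ)` of order `12`. The matrices `Mg, Mh`
(acting by `v ↦ M *ᵥ v`) send `e₁ ↦ e₂, e₂ ↦ e₃, e₃ ↦ (1,−2,2)` and
`e₁ ↦ e₂, e₂ ↦ e₁, e₃ ↦ (2,−2,1)` respectively. -/
theorem stmt_18 :
    let G : Matrix (Fin 3) (Fin 3) ℤ := !![-2, 1, 7; 1, -2, 1; 7, 1, -2]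
    let Mg : Matrix (Fin 3) (Fin 3) ℤ := !![0, 0, 1; 1, 0, -2; 0, 1, 2]
    let Mh : Matrix (Fin 3) (Fin 3) ℤ := !![0, 1, 2; 1, 0, -2; 0, 0, 1]
    Mg.transpose * G * Mg = G ∧ Mh.transpose * G * Mh = G ∧
    ∃ g h : GL (Fin 3) ℤ,
      (↑g : Matrix (Fin 3) (Fin 3) ℤ) = Mg ∧
      (↑h : Matrix (Fin 3) (Fin 3) ℤ) = Mh ∧
      orderOf g = 6 ∧ orderOf h = 2 ∧ h * g * h = g⁻¹ ∧
      Nat.card (Subgroup.closure ({g, h} : Set (GL (Fin 3) ℤ))) = 12 ∧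
      Nonempty ((Subgroup.closure ({g, h} : Set (GL (Fin 3) ℤ))) ≃* DihedralGroup 6) := by
  intro G Mg Mh
  have hg : hexagonRotation ^ 6 = 1 := by
    rw [← orderOf_hexagonRotation]; exact pow_orderOf_eq_one _
  have hh : hexagonReflection ^ 2 = 1 := by
    rw [← orderOf_hexagonReflection]; exact pow_orderOf_eq_one _
  have hgh := hexagonReflection_mul_hexagonRotation_mul_hexagonReflection
  let e := DihedralGroup.closurePairEquiv hg hh hgh orderOf_hexagonRotation
    hexagonReflection_notMem_zpowers
  refine ⟨by decide, by decide, hexagonRotation, hexagonReflection, rfl, rfl,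
    orderOf_hexagonRotation, orderOf_hexagonReflection, hgh, ?_, ⟨e⟩⟩
  rw [Nat.card_congr e.toEquiv, DihedralGroup.nat_card]
end
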